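/- arXiv:2109.04805 — 8 statements merged into one kernel-verified Lean document; each statement's English description precedes it below -/
import Mathlib

section
/- Let X be a set, F a field, d a positive integer, and f : X → F^d. Then the Littlestone dimension of the family C_f = {Z_{f,a} : a ∈ F^d, a ≠ 0} is strictly less than d; that is, there is no well-labeled (X, C_f)-labeled tree of depth d. -/
/-- The zero set of the linear combination of the components of `f` with coefficients `a`. -/
def zeroSet {X F : Type*} [Field F] {d : ℕ} (f : X → Fin d → F) (a : Fin d → F) : Set X :=
  {c | ∑ i, a i * f c i = 0}

/-- The family of zero sets of nontrivial linear combinations of the components of `f`. -/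
def zeroSets {X F : Type*} [Field F] {d : ℕ} (f : X → Fin d → F) : Set (Set X) :=
  {s | ∃ a : Fin d → F, a ≠ 0 ∧ s = zeroSet f a}

/-- The leaf `τ` of a binary tree of depth `n` with node labels `t` and leaf label `A`
is well-labeled: for each `k < n`, the label of the node at the restriction of `τ` to
its first `k` entries belongs to `A` iff `τ k = true`. -/
def WellLabeledLeaf {X : Type*} (n : ℕ) (t : (k : ℕ) → (Fin k → Bool) → X)
    (A : Set X) (τ : Fin n → Bool) : Prop :=
  ∀ k : Fin n, (t k.val (fun j : Fin k.val => τ (Fin.castLE k.isLt.le j)) ∈ A) ↔ τ k = true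

/-- There is an `(X, C)`-labeled tree of depth `n` all of whose leaves are well-labeled. -/
def HasWellLabeledTree {X : Type*} (C : Set (Set X)) (n : ℕ) : Prop :=
  ∃ (t : (k : ℕ) → (Fin k → Bool) → X) (L : (Fin n → Bool) → Set X),
    (∀ τ, L τ ∈ C) ∧ ∀ τ, WellLabeledLeaf n t (L τ) τ

/-!
The Littlestone dimension of the zero sets `{c | ℓ c a = 0}`, `a ∈ V \ {0}`, of a family of
linear functionals `ℓ : X → V*` is less than `dim V`. Let `x` be the root of a well-labeled tree
of depth `n + 1`. Its `false` leaves give some `a ∈ V` with `ℓ x a ≠ 0`, so `W = V ∩ ker (ℓ x)` is a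
proper subspace of `V`, while the labels of its `true` subtree are zero sets of vectors of `W`;
by induction `n < dim W < dim V`.
-/

theorem Fin.cons_castLE {α : Type*} {k n : ℕ} (h : k < n) (b : α) (τ : Fin n → α) :
    (fun j : Fin (k + 1) => (Fin.cons b τ : Fin (n + 1) → α) (Fin.castLE (by omega) j)) =
      Fin.cons b fun j : Fin k => τ (Fin.castLE h.le j) := by
  funext j
  refine Fin.cases ?_ (fun i => ?_) j
  · simp only [Fin.castLE_zero, Fin.cons_zero]
  · simp only [Fin.castLE_succ, Fin.cons_succ]

section

variable {X : Type*}

namespace HasWellLabeledTree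

theorem mono {C D : Set (Set X)} (hCD : C ⊆ D) {n : ℕ} (h : HasWellLabeledTree C n) :
    HasWellLabeledTree D n := by
  obtain ⟨t, L, hL, hwell⟩ := h
  exact ⟨t, L, fun τ => hCD (hL τ), hwell⟩

theorem nonempty {C : Set (Set X)} {n : ℕ} (h : HasWellLabeledTree C n) : C.Nonempty := by
  obtain ⟨_, L, hL, _⟩ := h
  exact ⟨_, hL fun _ => false⟩

theorem exists_root {C : Set (Set X)} {n : ℕ} (h : HasWellLabeledTree C (n + 1)) :
    ∃ x, (∃ A ∈ C, x ∉ A) ∧ HasWellLabeledTree {A ∈ C | x ∈ A} n := by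
  obtain ⟨t, L, hL, hwell⟩ := h
  have hroot : ∀ τ, t 0 Fin.elim0 ∈ L τ ↔ τ 0 = true := fun τ => by
    rw [Subsingleton.elim Fin.elim0 fun j : Fin 0 => τ (Fin.castLE (n + 1).zero_le j)]
    exact hwell τ 0
  refine ⟨t 0 Fin.elim0, ⟨L fun _ => false, hL _, by simp [hroot]⟩,
    fun k σ => t (k + 1) (Fin.cons true σ), fun τ => L (Fin.cons true τ),
    fun τ => ⟨hL _, by simp [hroot]⟩, fun τ k => ?_⟩
  simpa only [WellLabeledLeaf, Fin.val_succ, Fin.cons_castLE k.isLt, Fin.cons_succ]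
    using hwell (Fin.cons true τ) k.succ

end HasWellLabeledTree

section Dual

variable {F M : Type*} [Field F] [AddCommGroup M] [Module F M]

def zeroSetsOn (ℓ : X → Module.Dual F M) (V : Submodule F M) : Set (Set X) :=
  {s | ∃ a ∈ V, a ≠ 0 ∧ s = {c | ℓ c a = 0}}

theorem lt_finrank_of_hasWellLabeledTree_zeroSetsOn [FiniteDimensional F M]
    (ℓ : X → Module.Dual F M) {V : Submodule F M} {n : ℕ}
    (h : HasWellLabeledTree (zeroSetsOn ℓ V) n) : n < Module.finrank F V := by
  induction n generalizing V with
  | zero =>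
    obtain ⟨_, a, haV, ha0, -⟩ := h.nonempty
    rw [Nat.pos_iff_ne_zero, Ne, Submodule.finrank_eq_zero]
    rintro rfl
    exact ha0 ((Submodule.mem_bot F).1 haV)
  | succ n ih =>
    obtain ⟨x, ⟨_, ⟨a, haV, -, rfl⟩, hxa⟩, hsub⟩ := h.exists_root
    have hlt : V ⊓ LinearMap.ker (ℓ x) < V := inf_lt_left.2 fun hle => hxa (hle haV)
    have hrest : HasWellLabeledTree (zeroSetsOn ℓ (V ⊓ LinearMap.ker (ℓ x))) n := by
      refine hsub.mono ?_
      rintro _ ⟨⟨a, haV, ha0, rfl⟩, hxa⟩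
      exact ⟨a, ⟨haV, hxa⟩, ha0, rfl⟩
    exact Nat.lt_of_le_of_lt (ih hrest) (Submodule.finrank_lt_finrank_of_lt hlt)

end Dual

end

theorem statement1_general {X F : Type*} [Field F] {d : ℕ} (f : X → Fin d → F) :
    ¬ HasWellLabeledTree (zeroSets f) d := by
  intro h
  have hsub : zeroSets f ⊆ zeroSetsOn (fun c => (dotProductBilin F F).flip (f c)) ⊤ := by
    rintro _ ⟨a, ha0, rfl⟩
    exact ⟨a, trivial, ha0, rfl⟩
  simpa using lt_finrank_of_hasWellLabeledTree_zeroSetsOn _ (h.mono hsub)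

/-- The Littlestone dimension of `C_f` is strictly less than `d`:
there is no well-labeled `(X, C_f)`-labeled tree of depth `d`. -/
theorem statement1 {X F : Type*} [Field F] {d : ℕ} (hd : 0 < d) (f : X → Fin d → F) :
    ¬ HasWellLabeledTree (zeroSets f) d :=
  statement1_general f
end

section
/- Let X be a set, F a field, d a positive integer, and f : X → F^d linearly independent (the component functions f_0,...,f_{d-1} are linearly independent in the F-vector space of functions X → F). Then the family C_f = {Z_{f,a} : a ∈ F^d, a ≠ 0} shatters some subset of X of size d − 1; in particular, the VC-dimension of C_f is at least d − 1. -/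
/-- A family of sets `C` shatters `Y` if every subset of `Y` is the trace of a member of `C`. -/
def ShattersSet {X : Type*} (C : Set (Set X)) (Y : Set X) : Prop :=
  ∀ Z ⊆ Y, ∃ A ∈ C, A ∩ Y = Z

/-!
Linear independence of the components says that no nonzero functional `a ⬝ᵥ ·` vanishes on all
values of `f`, so these values span `F^d` and contain a basis `f x₀, …, f x_{d-1}`. Prescribing
`a ⬝ᵥ f xⱼ` for all `j` is then a solvable linear system. With `Y = {x₀, …, x_{d-2}}`, a subset
`Z ⊆ Y` is cut out by asking for `0` on `Z` and `1` elsewhere; the value `1` at `x_{d-1} ∉ Y`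
forces `a ≠ 0`.
-/

open Module Submodule

theorem mem_zeroSet_iff {X F : Type*} [Field F] {d : ℕ} {f : X → Fin d → F} {a : Fin d → F}
    {c : X} : c ∈ zeroSet f a ↔ a ⬝ᵥ f c = 0 :=
  Iff.rfl

theorem span_range_eq_top_of_linearIndependent_swap {X F ι : Type*} [Field F] [Fintype ι]
    [DecidableEq ι] (f : X → ι → F) (hf : LinearIndependent F (fun i x => f x i)) :
    span F (Set.range f) = ⊤ := by
  rw [← dualAnnihilator_eq_bot_iff, eq_bot_iff]
  intro φ hφ
  obtain ⟨a, rfl⟩ := (dotProductEquiv F ι).surjective φ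
  have hvanish : ∑ i, a i • (fun x => f x i) = 0 := by
    funext x
    simpa [Finset.sum_apply, dotProduct] using
      (mem_dualAnnihilator _).mp hφ (f x) (subset_span ⟨x, rfl⟩)
  have ha : a = 0 := funext (Fintype.linearIndependent_iff.mp hf a hvanish)
  simp [ha]

theorem exists_linearIndependent_comp_of_span_range_eq_top {X K V : Type*} [Field K]
    [AddCommGroup V] [Module K V] [FiniteDimensional K V] {n : ℕ} (hn : finrank K V = n)
    (g : X → V) (hg : span K (Set.range g) = ⊤) :
    ∃ x : Fin n → X, LinearIndependent K (g ∘ x) := by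
  subst hn
  let B := Basis.ofSpan hg.ge
  let B' := B.reindex (B.indexEquiv (finBasis K V))
  have hB' : ∀ j, B' j ∈ Set.range g := fun j =>
    Basis.ofSpan_subset hg.ge (by rw [Basis.reindex_apply]; exact Set.mem_range_self _)
  choose x hx using hB'
  exact ⟨x, by simpa [Function.comp_def, hx] using B'.linearIndependent⟩

theorem exists_dotProduct_eq_of_linearIndependent {K ι : Type*} [Field K] [Fintype ι]
    [DecidableEq ι] {v : ι → ι → K} (hv : LinearIndependent K v) (c : ι → K) :
    ∃ a, ∀ j, a ⬝ᵥ v j = c j := by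
  have hunit : IsUnit (Matrix.of v) := Matrix.linearIndependent_rows_iff_isUnit.mp hv
  obtain ⟨a, ha⟩ := Matrix.mulVec_surjective_iff_isUnit.mpr hunit c
  exact ⟨a, fun j => by rw [dotProduct_comm]; exact congrFun ha j⟩

theorem shattersSet_zeroSets_of_exists_dotProduct_eq {X F : Type*} [Field F] {d : ℕ}
    (f : X → Fin d → F) {Y : Set X} {p : X} (hp : p ∉ Y)
    (hinterp : ∀ c : X → F, ∃ a, ∀ y ∈ insert p Y, a ⬝ᵥ f y = c y) :
    ShattersSet (zeroSets f) Y := by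
  classical
  intro Z hZ
  obtain ⟨a, ha⟩ := hinterp fun y => if y ∈ Z then 0 else 1
  have ha0 : a ≠ 0 := by
    rintro rfl
    exact hp (hZ (by simpa using ha p (Set.mem_insert _ _)))
  refine ⟨zeroSet f a, ⟨a, ha0, rfl⟩, Set.ext fun y => ?_⟩
  rw [Set.mem_inter_iff, mem_zeroSet_iff]
  refine ⟨fun ⟨hy0, hyY⟩ => ?_, fun hyZ => ⟨?_, hZ hyZ⟩⟩
  · by_contra hyZ
    simpa [hyZ, hy0] using ha y (Set.mem_insert_of_mem _ hyY)
  · simpa [hyZ] using ha y (Set.mem_insert_of_mem _ (hZ hyZ))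

/-- If the component functions of `f : X → F^d` are linearly independent,
then `C_f` shatters some subset of `X` of size `d - 1`; in particular its
VC-dimension is at least `d - 1`. -/
theorem statement3 {X F : Type*} [Field F] {d : ℕ} (hd : 0 < d) (f : X → Fin d → F)
    (hf : LinearIndependent F (fun i : Fin d => fun x : X => f x i)) :
    ∃ Y : Finset X, Y.card = d - 1 ∧ ShattersSet (zeroSets f) ↑Y := by
  classical
  obtain ⟨n, rfl⟩ := Nat.exists_eq_add_one_of_ne_zero hd.ne'
  obtain ⟨x, hx⟩ := exists_linearIndependent_comp_of_span_range_eq_top (finrank_fin_fun F) f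
    (span_range_eq_top_of_linearIndependent_swap f hf)
  have hxinj : Function.Injective x := hx.injective.of_comp
  refine ⟨Finset.univ.image (x ∘ Fin.castSucc), ?_, ?_⟩
  · rw [Finset.card_image_of_injective _ (hxinj.comp (Fin.castSucc_injective n))]
    simp
  refine shattersSet_zeroSets_of_exists_dotProduct_eq f (p := x (Fin.last n)) ?_ fun c => ?_
  · simpa using fun k hk => (Fin.castSucc_lt_last k).ne (hxinj hk)
  obtain ⟨a, ha⟩ := exists_dotProduct_eq_of_linearIndependent hx (c ∘ x)
  refine ⟨a, fun y hy => ?_⟩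
  obtain rfl | ⟨k, -, rfl⟩ := by simpa using hy
  exacts [ha _, ha _]
end

section
/- Let X be a set, F a field, d a positive integer, and f : X → F^d. Suppose there exist one-dimensional linear subspaces V_0, ..., V_{k-1} of F^d such that f(X) ⊆ V_0 ∪ ... ∪ V_{k-1}. Then the family C_f = {Z_{f,a} : a ∈ F^d, a ≠ 0} has at most 2^k elements. -/
/-!
A line `ℓ` either lies in the hyperplane `a · y = 0` or meets it only in `0`. So if every value
of `f` lies on one of the lines `V i`, the zero set `Z_{f,a}` consists of the zeros of `f`
together with the points sent to the lines contained in that hyperplane; it is therefore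
determined by a subset of the `k` lines, and there are at most `2 ^ k` of them.
-/

open Module

theorem Submodule.le_ker_of_finrank_eq_one {K V M : Type*} [Field K] [AddCommGroup V]
    [Module K V] [AddCommGroup M] [Module K M] {S : Submodule K V} (hS : finrank K S = 1)
    {w : V} (hw : w ∈ S) (hw0 : w ≠ 0) {φ : V →ₗ[K] M} (hφ : φ w = 0) :
    S ≤ LinearMap.ker φ := by
  rw [eq_span_singleton_of_mem_of_finrank_eq_one hS hw hw0, Submodule.span_singleton_le_iff_mem]
  exact hφ

theorem preimage_ker_eq_of_forall_mem_line {K E M X ι : Type*} [Field K] [AddCommGroup E]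
    [Module K E] [AddCommGroup M] [Module K M] {V : ι → Submodule K E}
    (hV : ∀ i, finrank K (V i) = 1) {g : X → E} (hg : ∀ x, ∃ i, g x ∈ V i) (φ : E →ₗ[K] M) :
    g ⁻¹' LinearMap.ker φ = {x | g x = 0 ∨ ∃ i, V i ≤ LinearMap.ker φ ∧ g x ∈ V i} := by
  ext x
  constructor
  · intro hx
    by_cases h0 : g x = 0
    · exact Or.inl h0
    · obtain ⟨i, hi⟩ := hg x
      exact Or.inr ⟨i, (V i).le_ker_of_finrank_eq_one (hV i) hi h0 hx, hi⟩
  · rintro (h0 | ⟨i, hle, hi⟩)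
    · simp [h0]
    · exact hle hi

theorem ncard_range_le_two_pow {ι α : Type*} [Fintype ι] (h : Set ι → α) :
    (Set.range h).ncard ≤ 2 ^ Fintype.card ι := by
  rw [← Nat.card_coe_set_eq, ← Fintype.card_set, ← Nat.card_eq_fintype_card]
  exact Finite.card_range_le h

theorem zeroSet_eq_preimage_ker {X F : Type*} [Field F] {d : ℕ} (f : X → Fin d → F)
    (a : Fin d → F) : zeroSet f a = f ⁻¹' LinearMap.ker (dotProductBilin F F a) :=
  rfl

theorem statement6_general {X F : Type*} [Field F] {d : ℕ} (f : X → Fin d → F)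
    (k : ℕ) (V : Fin k → Submodule F (Fin d → F))
    (hV : ∀ i, Module.finrank F (V i) = 1)
    (hcov : ∀ x : X, ∃ i, f x ∈ V i) :
    (zeroSets f).ncard ≤ 2 ^ k := by
  let lineUnion : Set (Fin k) → Set X := fun T => {x | f x = 0 ∨ ∃ i, i ∈ T ∧ f x ∈ V i}
  have hsub : zeroSets f ⊆ Set.range lineUnion := by
    rintro s ⟨a, -, rfl⟩
    refine ⟨{i | V i ≤ LinearMap.ker (dotProductBilin F F a)}, ?_⟩
    rw [zeroSet_eq_preimage_ker, preimage_ker_eq_of_forall_mem_line hV hcov]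
    rfl
  calc (zeroSets f).ncard ≤ (Set.range lineUnion).ncard := Set.ncard_le_ncard hsub
    _ ≤ 2 ^ k := by simpa using ncard_range_le_two_pow lineUnion

/-- If the image of `f` is covered by `k` one-dimensional subspaces
`V_0, ..., V_{k-1}` of `F^d`, then `C_f` has at most `2^k` elements. -/
theorem statement6 {X F : Type*} [Field F] {d : ℕ} (hd : 0 < d) (f : X → Fin d → F)
    (k : ℕ) (V : Fin k → Submodule F (Fin d → F))
    (hV : ∀ i, Module.finrank F (V i) = 1)
    (hcov : ∀ x : X, ∃ i, f x ∈ V i) :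
    (zeroSets f).ncard ≤ 2 ^ k :=
  statement6_general f k V hV hcov
end

section
/- Let X be a set, F a field, d a positive integer, and f : X → F^d. If f(X) is not contained in any finite union of proper linear subspaces of F^d, then there exists a sequence (c_i)_{i ∈ ℕ} of elements of X such that for every finite set I ⊆ ℕ with |I| ≤ d, the set {f(c_i) : i ∈ I} is linearly independent in F^d. -/
/-!
Choose the terms one at a time: by hypothesis `f` avoids any finite family of proper subspaces,
so `f (c n)` can be taken outside the span of every set of fewer than `d` earlier values, all of
which are proper subspaces of `F^d`. Any at most `d` terms are then linearly independent,
since each lies outside the span of the earlier ones.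
-/

open Finset Module Submodule

theorem exists_seq_forall_image_range {α : Type*} [DecidableEq α] {p : Finset α → α → Prop}
    (h : ∀ s, ∃ x, p s x) : ∃ c : ℕ → α, ∀ n, p ((range n).image c) (c n) := by
  choose next hnext using h
  let chain : ℕ → Finset α := fun n => Nat.rec ∅ (fun _ s => insert (next s) s) n
  have image_range : ∀ n, (range n).image (fun k => next (chain k)) = chain n := by
    intro n
    induction n with
    | zero => rfl
    | succ n ih => rw [range_add_one, image_insert, ih]
  exact ⟨fun n => next (chain n), fun n => by rw [image_range]; exact hnext _⟩

theorem linearIndepOn_of_forall_notMem_span_of_lt {ι K M : Type*} [LinearOrder ι] [DivisionRing K]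
    [AddCommGroup M] [Module K M] {v : ι → M} {d : ℕ}
    (hv : ∀ n (S : Finset ι), (∀ i ∈ S, i < n) → S.card < d → v n ∉ span K (v '' S))
    (I : Finset ι) (hI : I.card ≤ d) : LinearIndepOn K v I := by
  induction I using Finset.induction_on_max with
  | empty => simp
  | insert a s has ih =>
    have ha : a ∉ s := fun h => lt_irrefl a (has a h)
    rw [card_insert_of_notMem ha] at hI
    rw [coe_insert, linearIndepOn_insert (mod_cast ha)]
    exact ⟨ih (by omega), hv a s has (by omega)⟩

theorem Submodule.span_image_ne_top_of_card_lt_finrank {X K M : Type*} [DivisionRing K]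
    [AddCommGroup M] [Module K M] (f : X → M) {U : Finset X} (hU : U.card < finrank K M) :
    span K (f '' U) ≠ ⊤ := by
  classical
  intro htop
  have hle : (f '' U).finrank K ≤ (U.image f).card := by
    simpa using finrank_span_finset_le_card (R := K) (U.image f)
  rw [Set.finrank, htop, finrank_top] at hle
  exact absurd (hle.trans card_image_le) hU.not_ge

theorem exists_forall_notMem_of_not_covered {X K M : Type*} [DivisionRing K] [AddCommGroup M]
    [Module K M] {f : X → M}
    (hcov : ¬ ∃ (k : ℕ) (V : Fin k → Submodule K M), (∀ i, V i ≠ ⊤) ∧ ∀ x, ∃ i, f x ∈ V i)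
    (𝒱 : Finset (Submodule K M)) (h𝒱 : ∀ V ∈ 𝒱, V ≠ ⊤) : ∃ x, ∀ V ∈ 𝒱, f x ∉ V := by
  by_contra! hcover
  refine hcov ⟨𝒱.card, fun i => 𝒱.equivFin.symm i, fun i => h𝒱 _ (𝒱.equivFin.symm i).2,
    fun x => ?_⟩
  obtain ⟨V, hV, hfx⟩ := hcover x
  exact ⟨𝒱.equivFin ⟨V, hV⟩, by simpa using hfx⟩

theorem exists_forall_notMem_span_of_not_covered {X K M : Type*} [DivisionRing K]
    [AddCommGroup M] [Module K M] {f : X → M}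
    (hcov : ¬ ∃ (k : ℕ) (V : Fin k → Submodule K M), (∀ i, V i ≠ ⊤) ∧ ∀ x, ∃ i, f x ∈ V i)
    (T : Finset X) :
    ∃ x, ∀ U ⊆ T, U.card < finrank K M → f x ∉ span K (f '' U) := by
  classical
  have hproper : ∀ V ∈ (T.powerset.filter (·.card < finrank K M)).image
      fun U : Finset X => span K (f '' U), V ≠ ⊤ := by
    simp only [forall_mem_image]
    exact fun U hU => span_image_ne_top_of_card_lt_finrank f (mem_filter.1 hU).2
  obtain ⟨x, hx⟩ := exists_forall_notMem_of_not_covered hcov _ hproper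
  exact ⟨x, fun U hUT hU =>
    hx _ (mem_image_of_mem _ (mem_filter.2 ⟨mem_powerset.2 hUT, hU⟩))⟩

theorem statement7_general {X F : Type*} [Field F] {d : ℕ} (f : X → Fin d → F)
    (hcov : ¬ ∃ (k : ℕ) (V : Fin k → Submodule F (Fin d → F)),
      (∀ i, V i ≠ ⊤) ∧ ∀ x : X, ∃ i, f x ∈ V i) :
    ∃ c : ℕ → X, ∀ I : Finset ℕ, I.card ≤ d →
      LinearIndependent F (fun i : I => f (c i.1)) := by
  classical
  obtain ⟨c, hc⟩ := exists_seq_forall_image_range (exists_forall_notMem_span_of_not_covered hcov)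
  refine ⟨c, fun I hI => linearIndepOn_of_forall_notMem_span_of_lt (v := f ∘ c) ?_ I hI⟩
  intro n S hS hcard
  rw [Module.finrank_fin_fun] at hc
  have hsub : S.image c ⊆ (range n).image c :=
    image_subset_image fun i hi => mem_range.2 (hS i hi)
  simpa [Set.image_image] using hc n (S.image c) hsub (card_image_le.trans_lt hcard)

/-- If the image of `f : X → F^d` is not contained in any finite union of
proper linear subspaces of `F^d`, then there is a sequence `(c_i)` in `X` such that the
image under `f` of any at most `d` of its terms is linearly independent. -/
theorem statement7 {X F : Type*} [Field F] {d : ℕ} (hd : 0 < d) (f : X → Fin d → F)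
    (hcov : ¬ ∃ (k : ℕ) (V : Fin k → Submodule F (Fin d → F)),
      (∀ i, V i ≠ ⊤) ∧ ∀ x : X, ∃ i, f x ∈ V i) :
    ∃ c : ℕ → X, ∀ I : Finset ℕ, I.card ≤ d →
      LinearIndependent F (fun i : I => f (c i.1)) :=
  statement7_general f hcov
end

section
/- Fix an integer d ≥ 3 and an infinite field F. Let e_0, ..., e_{d-1} be the standard basis of F^d, let X = ∪_{i=0}^{d-2} span{e_0, e_{i+1}}, and let f : X → F^d be the inclusion map. Then the VC-density of C_f = {Z_{f,a} : a ∈ F^d, a ≠ 0} equals d − 1; in particular, for every n ∈ ℕ there is a finite subset Y ⊆ X of size (d−1)·n such that |{A ∩ Y : A ∈ C_f}| ≥ n^{d-1}, even though f(X) is contained in a finite union of 2-dimensional subspaces of F^d. -/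
/-- The set of traces of members of `C` on `Y`. -/
def traces {X : Type*} (C : Set (Set X)) (Y : Set X) : Set (Set X) :=
  (fun A => A ∩ Y) '' C

/-- The VC shatter function: the largest number of traces of `C` on an `n`-element subset. -/
noncomputable def vcShatterFn {X : Type*} (C : Set (Set X)) (n : ℕ) : ℕ :=
  sSup {m | ∃ Y : Finset X, Y.card = n ∧ (traces C ↑Y).ncard = m}

/-- The VC density: the infimum of positive reals `ℓ` such that the shatter function
is bounded by `K * n ^ ℓ` for some constant `K`. -/
noncomputable def vcDensity {X : Type*} (C : Set (Set X)) : ℝ :=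
  sInf {ℓ : ℝ | 0 < ℓ ∧ ∃ K : ℝ, ∀ n : ℕ, 1 ≤ n → (vcShatterFn C n : ℝ) ≤ K * (n : ℝ) ^ ℓ}

/-!
For a nonzero `a`, the trace of `ker a` on a finite `Y` is `Y ∩ f⁻¹ (span f(W))` for a
linearly independent `W` inside the trace, and `|W| < d` because `W` lies in the hyperplane
`ker a`. So `π(n)` is at most the number of subsets of size `< d`, i.e. `≤ d n^(d-1)`.

Conversely, for distinct scalars `t₁, …, tₙ` take the `(d-1)n` points `tⱼ e₀ + eᵢ` (`i ≠ 0`) of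
the planes `span {e₀, eᵢ}`. For every `σ : {i ≠ 0} → Fin n` the hyperplane
`x₀ = ∑ i, t_{σ i} xᵢ` contains exactly the points `t_{σ i} e₀ + eᵢ`, so these points carry
`n^(d-1)` traces, and the VC density is `d - 1`.
-/

open Module Submodule Set Filter Finset

theorem Finset.card_filter_card_lt_le {α : Type*} (Y : Finset α) (d : ℕ) (hY : 1 ≤ Y.card) :
    (Y.powerset.filter (·.card < d)).card ≤ d * Y.card ^ (d - 1) := by
  classical
  have hsub : Y.powerset.filter (·.card < d) ⊆ (range d).biUnion (powersetCard · Y) := by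
    intro W hW
    simp only [mem_filter, mem_powerset] at hW
    exact mem_biUnion.2 ⟨W.card, mem_range.2 hW.2, mem_powersetCard.2 ⟨hW.1, rfl⟩⟩
  calc (Y.powerset.filter (·.card < d)).card
      ≤ ∑ k ∈ range d, (powersetCard k Y).card := (card_le_card hsub).trans card_biUnion_le
    _ ≤ ∑ _k ∈ range d, Y.card ^ (d - 1) := by
      refine sum_le_sum fun k hk => ?_
      rw [card_powersetCard]
      exact (Nat.choose_le_pow _ k).trans (Nat.pow_le_pow_right hY (by simp at hk; omega))
    _ = d * Y.card ^ (d - 1) := by simp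

theorem le_of_forall_natCast_rpow_le {a b K : ℝ}
    (h : ∀ m : ℕ, 1 ≤ m → (m : ℝ) ^ a ≤ K * (m : ℝ) ^ b) : a ≤ b := by
  by_contra! hba
  have hm : ∀ᶠ m : ℕ in atTop, K < (m : ℝ) ^ (a - b) :=
    ((tendsto_rpow_atTop (sub_pos.2 hba)).comp tendsto_natCast_atTop_atTop).eventually_gt_atTop K
  obtain ⟨m, hKm, hm1⟩ := (hm.and (eventually_ge_atTop 1)).exists
  have hm0 : (0 : ℝ) < m := by exact_mod_cast hm1
  have hma := h m hm1
  rw [← sub_add_cancel a b, Real.rpow_add hm0] at hma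
  exact (mul_lt_mul_of_pos_right hKm (Real.rpow_pos_of_pos hm0 b)).not_ge hma

section Shatter

variable {X : Type*} (C : Set (Set X))

theorem finite_traces {Y : Set X} (hY : Y.Finite) : (traces C Y).Finite :=
  hY.finite_subsets.subset (by rintro _ ⟨A, -, rfl⟩; exact inter_subset_right)

theorem ncard_traces_le_two_pow (Y : Finset X) : (traces C ↑Y).ncard ≤ 2 ^ Y.card := by
  calc (traces C ↑Y).ncard ≤ (𝒫 (Y : Set X)).ncard :=
        ncard_le_ncard (by rintro _ ⟨A, -, rfl⟩; exact inter_subset_right)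
          Y.finite_toSet.powerset
    _ = 2 ^ Y.card := by rw [ncard_powerset _ Y.finite_toSet, ncard_coe_finset]

theorem ncard_traces_le_vcShatterFn (Y : Finset X) :
    (traces C ↑Y).ncard ≤ vcShatterFn C Y.card :=
  le_csSup ⟨2 ^ Y.card, by rintro _ ⟨Z, hZ, rfl⟩; exact hZ ▸ ncard_traces_le_two_pow C Z⟩
    ⟨Y, rfl, rfl⟩

theorem vcShatterFn_le {n B : ℕ} (h : ∀ Y : Finset X, Y.card = n → (traces C ↑Y).ncard ≤ B) :
    vcShatterFn C n ≤ B :=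
  csSup_le' (by rintro _ ⟨Y, hY, rfl⟩; exact h Y hY)

theorem vcDensity_eq_of_bounds {ℓ : ℕ} (hℓ : 0 < ℓ) {K : ℝ}
    (hup : ∀ n, 1 ≤ n → (vcShatterFn C n : ℝ) ≤ K * (n : ℝ) ^ ℓ) {c : ℕ} (hc : 0 < c)
    (hlow : ∀ m, ∃ Y : Finset X, Y.card = c * m ∧ m ^ ℓ ≤ (traces C ↑Y).ncard) :
    vcDensity C = ℓ := by
  have hmem : (ℓ : ℝ) ∈ {ℓ : ℝ | 0 < ℓ ∧ ∃ K : ℝ, ∀ n : ℕ, 1 ≤ n →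
      (vcShatterFn C n : ℝ) ≤ K * (n : ℝ) ^ ℓ} :=
    ⟨by positivity, K, by simpa only [Real.rpow_natCast] using hup⟩
  refine le_antisymm (csInf_le ⟨0, fun _ h => h.1.le⟩ hmem) (le_csInf ⟨_, hmem⟩ ?_)
  rintro ℓ' ⟨-, K', hK'⟩
  refine le_of_forall_natCast_rpow_le (K := K' * (c : ℝ) ^ ℓ') fun m hm => ?_
  calc (m : ℝ) ^ (ℓ : ℝ) = ((m ^ ℓ : ℕ) : ℝ) := by push_cast; exact Real.rpow_natCast _ _
    _ ≤ vcShatterFn C (c * m) := by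
      obtain ⟨Y, hY, hmY⟩ := hlow m
      exact_mod_cast hY ▸ hmY.trans (ncard_traces_le_vcShatterFn C Y)
    _ ≤ K' * ((c * m : ℕ) : ℝ) ^ ℓ' := hK' _ (Nat.one_le_iff_ne_zero.2 (by positivity))
    _ = K' * (c : ℝ) ^ ℓ' * (m : ℝ) ^ ℓ' := by
      push_cast; rw [Real.mul_rpow (by positivity) (by positivity)]; ring

end Shatter

section ZeroSets

variable {X F : Type*} [Field F] {d : ℕ}

theorem finrank_ker_dotProduct_lt {a : Fin d → F} (ha : a ≠ 0) :
    finrank F (LinearMap.ker (dotProductBilin F F a)) < d := by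
  obtain ⟨i, hi⟩ := Function.ne_iff.1 ha
  have hker : LinearMap.ker (dotProductBilin F F a) ≠ ⊤ := fun h => hi <| by
    have : (Pi.single i 1 : Fin d → F) ∈ LinearMap.ker (dotProductBilin F F a) := h ▸ mem_top
    simpa [dotProduct_single] using this
  simpa using finrank_lt hker

theorem exists_subset_card_lt_inter_zeroSet_eq (f : X → Fin d → F) {a : Fin d → F} (ha : a ≠ 0)
    (Y : Finset X) :
    ∃ W ⊆ Y, W.card < d ∧ zeroSet f a ∩ ↑Y = ↑Y ∩ f ⁻¹' span F (f '' ↑W) := by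
  set H := LinearMap.ker (dotProductBilin F F a)
  obtain ⟨b, hbS, -, hspan, hli⟩ :=
    exists_linearIndepOn_extension (linearIndepOn_empty F f) (empty_subset (zeroSet f a ∩ ↑Y))
  have hbH : ∀ x ∈ b, f x ∈ H := fun x hx => (hbS hx).1
  have hb : b.Finite := Y.finite_toSet.subset (hbS.trans inter_subset_right)
  have := hb.fintype
  refine ⟨hb.toFinset, ?_, ?_, ?_⟩
  · exact fun x hx => (hbS (hb.mem_toFinset.1 hx)).2
  · rw [hb.card_toFinset]
    have : LinearIndependent F (fun x : b => (⟨f x, hbH x x.2⟩ : H)) :=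
      LinearIndependent.of_comp H.subtype hli
    exact this.fintype_card_le_finrank.trans_lt (finrank_ker_dotProduct_lt ha)
  · rw [hb.coe_toFinset]
    ext x
    refine ⟨fun hx => ⟨hx.2, hspan ⟨x, hx, rfl⟩⟩, fun hx => ⟨?_, hx.1⟩⟩
    exact span_le.2 (by rintro _ ⟨y, hy, rfl⟩; exact hbH y hy) hx.2

theorem ncard_traces_zeroSets_le (f : X → Fin d → F) (Y : Finset X) :
    (traces (zeroSets f) ↑Y).ncard ≤ (Y.powerset.filter (·.card < d)).card := by
  set small := Y.powerset.filter (·.card < d)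
  have hsub : traces (zeroSets f) ↑Y ⊆
      (fun W : Finset X => ↑Y ∩ f ⁻¹' span F (f '' ↑W)) '' ↑small := by
    rintro _ ⟨_, ⟨a, ha, rfl⟩, rfl⟩
    obtain ⟨W, hWY, hWd, hW⟩ := exists_subset_card_lt_inter_zeroSet_eq f ha Y
    exact ⟨W, by simpa [small] using ⟨hWY, hWd⟩, hW.symm⟩
  calc (traces (zeroSets f) ↑Y).ncard
      ≤ ((fun W : Finset X => ↑Y ∩ f ⁻¹' span F (f '' ↑W)) '' ↑small).ncard :=
        ncard_le_ncard hsub (small.finite_toSet.image _)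
    _ ≤ small.card := (ncard_image_le small.finite_toSet).trans (ncard_coe_finset small).le

theorem vcShatterFn_zeroSets_le (f : X → Fin d → F) {n : ℕ} (hn : 1 ≤ n) :
    vcShatterFn (zeroSets f) n ≤ d * n ^ (d - 1) :=
  vcShatterFn_le _ fun Y hY => (ncard_traces_zeroSets_le f Y).trans <|
    hY ▸ Y.card_filter_card_lt_le d (hY ▸ hn)

end ZeroSets

section CoordPlanes

variable {X F : Type*} [Field F] {d : ℕ}

theorem finrank_span_single_pair {i j : Fin d} (hij : i ≠ j) :
    finrank F (span F ({Pi.single i (1 : F), Pi.single j (1 : F)} : Set (Fin d → F))) = 2 := by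
  have hli : LinearIndependent F ![(Pi.single i 1 : Fin d → F), Pi.single j 1] := by
    refine LinearIndependent.pair_iff.2 fun s u hsu => ?_
    simpa [hij, hij.symm] using And.intro (congrFun hsu i) (congrFun hsu j)
  have := finrank_span_eq_card hli
  rw [Matrix.range_cons_cons_empty] at this
  simpa using this

variable (F) in
def coordPlanes (i₀ : Fin d) : Set (Fin d → F) :=
  ⋃ i ∈ {i : Fin d | i ≠ i₀},
    (span F ({Pi.single i₀ (1 : F), Pi.single i (1 : F)} : Set (Fin d → F)) : Set (Fin d → F))

theorem smul_single_add_single_mem_coordPlanes {i₀ i : Fin d} (hi : i ≠ i₀) (t : F) :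
    t • Pi.single i₀ 1 + Pi.single i 1 ∈ coordPlanes F i₀ :=
  mem_biUnion hi <| add_mem (smul_mem _ _ (subset_span (mem_insert _ _)))
    (subset_span (mem_insert_of_mem _ rfl))

theorem smul_single_add_single_inj {i₀ i i' : Fin d} (hi : i ≠ i₀) (hi' : i' ≠ i₀) {t t' : F}
    (h : t • Pi.single i₀ (1 : F) + Pi.single i 1 = t' • Pi.single i₀ 1 + Pi.single i' 1) :
    i = i' ∧ t = t' := by
  have ht : t = t' := by simpa [hi.symm, hi'.symm] using congrFun h i₀
  refine ⟨by_contra fun hii' => ?_, ht⟩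
  simpa [hi, hii', Pi.single_apply] using congrFun h i

theorem dotProduct_smul_single_add_single (a : Fin d → F) (i₀ i : Fin d) (t : F) :
    a ⬝ᵥ (t • Pi.single i₀ 1 + Pi.single i 1) = t * a i₀ + a i := by
  simp [dotProduct_add, dotProduct_smul, dotProduct_single]

theorem pow_le_ncard_traces_zeroSets (f : X → Fin d → F) (i₀ : Fin d) {n : ℕ} {t : Fin n → F}
    (ht : Function.Injective t) (p : {i // i ≠ i₀} × Fin n → X)
    (hp : ∀ z, f (p z) = t z.2 • Pi.single i₀ 1 + Pi.single (z.1 : Fin d) 1) (Y : Finset X)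
    (hpY : ∀ z, p z ∈ Y) : n ^ (d - 1) ≤ (traces (zeroSets f) ↑Y).ncard := by
  let a (σ : {i // i ≠ i₀} → Fin n) : Fin d → F := fun k => if h : k = i₀ then 1 else -t (σ ⟨k, h⟩)
  have hmem (σ z) : p z ∈ zeroSet f (a σ) ↔ z.2 = σ z.1 := by
    obtain ⟨⟨i, hi⟩, j⟩ := z
    change a σ ⬝ᵥ f (p _) = 0 ↔ _
    rw [hp, dotProduct_smul_single_add_single]
    simp [a, hi, add_neg_eq_zero, ht.eq_iff]
  have ha (σ) : a σ ≠ 0 := fun h => by simpa [a] using congrFun h i₀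
  let T (σ : {i // i ≠ i₀} → Fin n) : traces (zeroSets f) ↑Y :=
    ⟨zeroSet f (a σ) ∩ ↑Y, _, ⟨a σ, ha σ, rfl⟩, rfl⟩
  have hT : Function.Injective T := fun σ σ' h => funext fun i => by
    have hi : p (i, σ i) ∈ (T σ' : Set X) := h ▸ ⟨(hmem σ _).2 rfl, hpY _⟩
    exact (hmem σ' _).1 hi.1
  have := (finite_traces (zeroSets f) Y.finite_toSet).to_subtype
  calc n ^ (d - 1) = Nat.card ({i // i ≠ i₀} → Fin n) := by simp
    _ ≤ Nat.card (traces (zeroSets f) ↑Y) := Nat.card_le_card_of_injective T hT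
    _ = _ := Nat.card_coe_set_eq _

theorem exists_finset_coordPlanes_pow_le_ncard_traces [Infinite F] (i₀ : Fin d) (n : ℕ) :
    ∃ Y : Finset (coordPlanes F i₀), Y.card = (d - 1) * n ∧
      n ^ (d - 1) ≤ (traces (zeroSets (fun x : coordPlanes F i₀ => (x : Fin d → F))) ↑Y).ncard := by
  classical
  let t (j : Fin n) : F := Infinite.natEmbedding F j
  have ht : Function.Injective t := (Infinite.natEmbedding F).injective.comp Fin.val_injective
  let p (z : {i // i ≠ i₀} × Fin n) : coordPlanes F i₀ :=
    ⟨t z.2 • Pi.single i₀ 1 + Pi.single (z.1 : Fin d) 1,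
      smul_single_add_single_mem_coordPlanes z.1.2 _⟩
  have hp : Function.Injective p := fun z z' h => by
    obtain ⟨hi, hj⟩ := smul_single_add_single_inj z.1.2 z'.1.2 (congrArg Subtype.val h)
    exact Prod.ext (Subtype.ext hi) (ht hj)
  refine ⟨Finset.univ.image p, ?_, pow_le_ncard_traces_zeroSets _ i₀ ht p (fun _ => rfl) _
    fun z => Finset.mem_image_of_mem p (Finset.mem_univ z)⟩
  rw [Finset.card_image_of_injective _ hp, Finset.card_univ, Fintype.card_prod]
  simp

theorem exists_finrank_eq_two_cover_coordPlanes (i₀ : Fin d) :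
    ∃ (k : ℕ) (V : Fin k → Submodule F (Fin d → F)),
      (∀ i, finrank F (V i) = 2) ∧ ∀ x ∈ coordPlanes F i₀, ∃ i, x ∈ V i := by
  let e := Fintype.equivFin {i : Fin d // i ≠ i₀}
  refine ⟨_, fun k => span F {Pi.single i₀ 1, Pi.single (e.symm k : Fin d) 1},
    fun k => finrank_span_single_pair (e.symm k).2.symm, fun x hx => ?_⟩
  obtain ⟨i, hi, hx⟩ := mem_iUnion₂.1 hx
  exact ⟨e ⟨i, hi⟩, by simpa using hx⟩

end CoordPlanes

/-- For `d ≥ 3`, `F` an infinite field, `X` the union of the planes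
`span {e_0, e_i}` (`i ≠ 0`) in `F^d` and `f : X → F^d` the inclusion, the VC density of
`C_f` is `d - 1`; in particular for every `n` there is a subset of size `(d-1)·n` with at
least `n^(d-1)` traces, even though `f(X)` is covered by finitely many 2-dimensional
subspaces. -/
theorem statement9 {F : Type*} [Field F] [Infinite F] {d : ℕ} (hd : 3 ≤ d)
    (Xs : Set (Fin d → F))
    (hXs : Xs = ⋃ i ∈ {i : Fin d | i ≠ ⟨0, by omega⟩},
      (Submodule.span F
        ({Pi.single (⟨0, by omega⟩ : Fin d) (1 : F), Pi.single i (1 : F)} : Set (Fin d → F)) :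
        Set (Fin d → F))) :
    vcDensity (zeroSets (fun x : Xs => (x : Fin d → F))) = (d : ℝ) - 1 ∧
    (∀ n : ℕ, ∃ Y : Finset Xs, Y.card = (d - 1) * n ∧
      n ^ (d - 1) ≤ (traces (zeroSets (fun x : Xs => (x : Fin d → F))) ↑Y).ncard) ∧
    (∃ (k : ℕ) (V : Fin k → Submodule F (Fin d → F)),
      (∀ i, Module.finrank F (V i) = 2) ∧ ∀ x ∈ Xs, ∃ i, x ∈ V i) := by
  subst hXs
  have hlow := exists_finset_coordPlanes_pow_le_ncard_traces (F := F) (⟨0, by omega⟩ : Fin d)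
  refine ⟨?_, hlow, exists_finrank_eq_two_cover_coordPlanes _⟩
  rw [← Nat.cast_pred (by omega)]
  exact vcDensity_eq_of_bounds _ (K := d) (by omega)
    (fun n hn => by exact_mod_cast vcShatterFn_zeroSets_le _ hn) (by omega) hlow
end

section
/- Let X be a set, F a field, d ≥ 2 an integer, and f : X → F^d. If f(X) is not contained in any finite union of proper linear subspaces of F^d, then C_f = {Z_{f,a} : a ∈ F^d, a ≠ 0} is maximal of Littlestone dimension d − 1: for every n ≥ d − 1, there exists an (X, C_f)-labeled tree of depth n having exactly Σ_{i=0}^{d-1} C(n, i) well-labeled leaves. -/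
/-!
Because `f(X)` avoids every finite union of proper subspaces, the field is infinite and there are
`x₀, x₁, …` in `X` whose images are in general position: any `d` of them are linearly independent
(choose `xₘ` outside the spans of all fewer than `d` earlier images). Label every node of depth `k`
by `xₖ`. If the set `T` of `1`-positions of a leaf has fewer than `d` elements, the leaf is
well-labeled by the zero set of a functional that vanishes on `f(xₖ)` for `k ∈ T` and on no other
`f(xₖ)`: the functionals vanishing on the span of the `f(xₖ)`, `k ∈ T`, form a space that the
finitely many bad conditions, being proper subspaces, cannot cover over an infinite field. If `T`
has at least `d` elements, no zero set works, as a functional vanishing on `d` independent vectors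
is zero. So the well-labeled leaves are exactly those with fewer than `d` ones.
-/

open Module Submodule Finset

section LinearAlgebra

variable {K M : Type*} [Field K] [AddCommGroup M] [Module K M]

theorem Submodule.exists_forall_notMem_of_ne_top [Infinite K] {ι : Type*} [Finite ι]
    (p : ι → Submodule K M) (hp : ∀ i, p i ≠ ⊤) : ∃ x, ∀ i, x ∉ p i := by
  cases nonempty_fintype ι
  obtain ⟨x, -, hx⟩ := Set.exists_of_ssubset <|
    iUnion_ssubset_of_forall_ne_top_of_card_lt univ p hp (by simp [ENat.card_eq_top_of_infinite])
  exact ⟨x, by simpa using hx⟩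

theorem Submodule.exists_mem_dualAnnihilator_forall_apply_ne_zero [Infinite K]
    (W : Submodule K M) {ι : Type*} [Finite ι] (w : ι → M) (hw : ∀ j, w j ∉ W) :
    ∃ φ ∈ W.dualAnnihilator, ∀ j, φ (w j) ≠ 0 := by
  obtain ⟨ψ, hψ⟩ := exists_forall_notMem_of_ne_top (K := K) (M := W.dualAnnihilator)
    (fun j => (LinearMap.ker (Dual.eval K M (w j))).comap W.dualAnnihilator.subtype) fun j h => by
      obtain ⟨φ, hφ, hWφ⟩ := W.exists_dual_map_eq_bot_of_notMem (hw j) inferInstance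
      have hφW : φ ∈ W.dualAnnihilator := (mem_dualAnnihilator φ).2 fun u hu =>
        (Submodule.eq_bot_iff _).1 hWφ _ (mem_map_of_mem hu)
      simpa using hφ (eq_top_iff'.1 h ⟨φ, hφW⟩)
  exact ⟨ψ, ψ.2, fun j => by simpa using hψ j⟩

theorem exists_dual_ne_zero_apply_eq_zero_iff [Infinite K] {ι : Type*} (u : ι → M)
    (S J : Finset ι) (hS : span K (u '' S) ≠ ⊤) (hu : ∀ j ∈ J, j ∉ S → u j ∉ span K (u '' S)) :
    ∃ φ : Dual K M, φ ≠ 0 ∧ ∀ j ∈ J, φ (u j) = 0 ↔ j ∈ S := by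
  obtain ⟨u₀, hu₀⟩ : ∃ u₀, u₀ ∉ span K (u '' S) := by
    by_contra! h
    exact hS (eq_top_iff'.2 h)
  -- `u₀` joins the family so that `φ ≠ 0` even when every index of `J` lies in `S`.
  obtain ⟨φ, hφS, hφ⟩ := (span K (u '' S)).exists_mem_dualAnnihilator_forall_apply_ne_zero
    (ι := Option {j : J // j.1 ∉ S}) (fun o => o.elim u₀ fun j => u j)
    (by rintro (_ | ⟨⟨j, hj⟩, hjS⟩); exacts [hu₀, hu j hj hjS])
  refine ⟨φ, fun h => hφ none (by simp [h]), fun j hj => ⟨fun h => ?_, fun hjS => ?_⟩⟩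
  · by_contra hjS
    exact hφ (some ⟨⟨j, hj⟩, hjS⟩) h
  · exact (mem_dualAnnihilator φ).1 hφS _ (subset_span ⟨j, hjS, rfl⟩)

theorem span_image_ne_top_of_card_lt_finrank {ι : Type*} (u : ι → M) (T : Finset ι)
    (hT : #T < finrank K M) : span K (u '' T) ≠ ⊤ := by
  classical
  rw [← coe_image]
  exact (span_lt_top_of_card_lt_finrank (by simpa using card_image_le.trans_lt hT)).ne

theorem LinearIndepOn.dual_eq_zero [FiniteDimensional K M] {ι : Type*} {u : ι → M}
    {T : Finset ι} (hT : LinearIndepOn K u (T : Set ι)) (hcard : #T = finrank K M)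
    (φ : Dual K M) (hφ : ∀ i ∈ T, φ (u i) = 0) : φ = 0 := by
  have hspan : span K (u '' T) = ⊤ := by
    rw [Set.image_eq_range]
    exact hT.linearIndependent.span_eq_top_of_card_eq_finrank' (by simpa using hcard)
  exact LinearMap.ext_on hspan fun _ ⟨i, hi, h⟩ => h ▸ hφ i hi

end LinearAlgebra

def CoveredByProperSubspaces (K : Type*) {X M : Type*} [Field K] [AddCommGroup M] [Module K M]
    (v : X → M) : Prop :=
  ∃ (k : ℕ) (V : Fin k → Submodule K M), (∀ i, V i ≠ ⊤) ∧ ∀ x : X, ∃ i, v x ∈ V i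

section NotCovered

variable {K M X : Type*} [Field K] [AddCommGroup M] [Module K M] {v : X → M}

theorem exists_forall_notMem_of_not_covered_s10 (hv : ¬ CoveredByProperSubspaces K v)
    (s : Finset (Submodule K M)) (hs : ∀ V ∈ s, V ≠ ⊤) : ∃ x, ∀ V ∈ s, v x ∉ V := by
  by_contra! h
  refine hv ⟨#s, fun i => s.equivFin.symm i, fun i => hs _ (s.equivFin.symm i).2, fun x => ?_⟩
  obtain ⟨V, hV, hxV⟩ := h x
  exact ⟨s.equivFin ⟨V, hV⟩, by simpa using hxV⟩

theorem infinite_of_not_covered [Module.Finite K M] (hv : ¬ CoveredByProperSubspaces K v)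
    (hM : 1 < finrank K M) : Infinite K := by
  classical
  by_contra hK
  have : Finite K := not_infinite_iff_finite.mp hK
  have : Finite M := Module.finite_of_finite K
  have : Fintype M := Fintype.ofFinite M
  obtain ⟨x, hx⟩ := exists_forall_notMem_of_not_covered_s10 hv (univ.image fun m => span K {m}) (by
    simp only [mem_image, mem_univ, true_and, forall_exists_index, forall_apply_eq_imp_iff]
    exact fun m => (span_lt_top_of_card_lt_finrank (by simpa using hM)).ne)
  exact hx _ (mem_image_of_mem _ (mem_univ (v x))) (mem_span_singleton_self _)

theorem exists_linearIndepOn_of_not_covered [FiniteDimensional K M]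
    (hv : ¬ CoveredByProperSubspaces K v) (n : ℕ) :
    ∃ x : ℕ → X, ∀ S ⊆ range n, #S ≤ finrank K M → LinearIndepOn K (v ∘ x) (S : Set ℕ) := by
  classical
  induction n with
  | zero =>
    obtain ⟨x₀, -⟩ := exists_forall_notMem_of_not_covered_s10 hv ∅ (by simp)
    refine ⟨fun _ => x₀, fun S hS _ => ?_⟩
    rw [range_zero, subset_empty] at hS
    rw [hS, coe_empty]
    exact linearIndepOn_empty K _
  | succ n ih =>
    obtain ⟨x, hx⟩ := ih
    obtain ⟨y, hy⟩ := exists_forall_notMem_of_not_covered_s10 hv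
      ({T ∈ (range n).powerset | #T < finrank K M}.image
        fun T : Finset ℕ => span K ((v ∘ x) '' T)) (by
        simp only [mem_image, mem_filter, forall_exists_index, and_imp]
        rintro _ T - hT rfl
        exact span_image_ne_top_of_card_lt_finrank _ T hT)
    have hagree : ∀ S ⊆ range n, Set.EqOn (v ∘ Function.update x n y) (v ∘ x) S :=
      fun S hS i hi => by simp [Function.update_of_ne (mem_range.1 (hS hi)).ne]
    have hsub : ∀ S ⊆ range (n + 1), n ∉ S → S ⊆ range n := fun S hS hn =>
      (subset_insert_iff_of_notMem hn).1 (range_add_one ▸ hS)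
    refine ⟨Function.update x n y, fun S hS hSr => ?_⟩
    by_cases hn : n ∈ S
    · have hS' := hsub _ ((erase_subset n S).trans hS) (notMem_erase n S)
      have hcard : #(S.erase n) < finrank K M := by
        have := card_pos.2 ⟨n, hn⟩
        rw [card_erase_of_mem hn]; omega
      rw [← insert_erase hn, coe_insert, linearIndepOn_insert (by simp),
        (hagree _ hS').image_eq]
      refine ⟨(hx _ hS' hcard.le).congr (hagree _ hS').symm, ?_⟩
      simpa using hy _ (mem_image_of_mem _ (mem_filter.2 ⟨mem_powerset.2 hS', hcard⟩))
    · exact (hx S (hsub S hS hn) hSr).congr (hagree S (hsub S hS hn)).symm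

end NotCovered

theorem card_bool_fun_card_filter_lt (n d : ℕ) :
    Nat.card {τ : Fin n → Bool // #{k | τ k = true} < d} = ∑ i ∈ range d, n.choose i := by
  classical
  let e : (Fin n → Bool) ≃ Finset (Fin n) :=
    { toFun τ := {k | τ k = true}
      invFun s k := decide (k ∈ s)
      left_inv τ := by ext; simp
      right_inv s := by ext; simp }
  rw [Nat.card_congr (e.subtypeEquiv (p := fun τ => #{k | τ k = true} < d)
      (q := fun s => #s < d) fun τ => Iff.rfl),
    Nat.card_eq_fintype_card, Fintype.card_subtype,
    card_eq_sum_card_fiberwise (f := card) (t := range d) fun s hs => by simpa using hs]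
  refine sum_congr rfl fun i hi => ?_
  rw [show n.choose i = #(powersetCard i (univ : Finset (Fin n))) by simp]
  congr 1
  ext s
  simp only [mem_filter, mem_univ, true_and, mem_powersetCard_univ]
  grind

section Leaves

variable {K M X : Type*} [Field K] [AddCommGroup M] [Module K M]
  {v : X → M} {x : ℕ → X} {n : ℕ}

def trueIndices (τ : Fin n → Bool) : Finset ℕ :=
  ({k | τ k = true} : Finset (Fin n)).map Fin.valEmbedding

theorem trueIndices_subset_range (τ : Fin n → Bool) : trueIndices τ ⊆ range n := by
  intro j
  simp only [trueIndices, Finset.mem_map, Fin.valEmbedding_apply, mem_range]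
  rintro ⟨k, -, rfl⟩
  exact k.isLt

theorem exists_wellLabeledLeaf_of_card_lt [Infinite K] [FiniteDimensional K M]
    (hx : ∀ S ⊆ range n, #S ≤ finrank K M → LinearIndepOn K (v ∘ x) (S : Set ℕ))
    {τ : Fin n → Bool} (hτ : #(trueIndices τ) < finrank K M) :
    ∃ φ : Dual K M, φ ≠ 0 ∧ WellLabeledLeaf n (fun k _ => x k) {c | φ (v c) = 0} τ := by
  have hT := trueIndices_subset_range τ
  obtain ⟨φ, hφ0, hφ⟩ :=
    exists_dual_ne_zero_apply_eq_zero_iff (v ∘ x) (trueIndices τ) (range n)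
      (span_image_ne_top_of_card_lt_finrank _ _ hτ) fun j hj hjT => by
        have := hx _ (insert_subset hj hT) ((card_insert_le _ _).trans hτ)
        rw [coe_insert, linearIndepOn_insert (by simpa)] at this
        exact this.2
  refine ⟨φ, hφ0, fun k => ?_⟩
  simpa [trueIndices, Fin.val_inj] using hφ k (by simp)

theorem not_wellLabeledLeaf_of_finrank_le [FiniteDimensional K M]
    (hx : ∀ S ⊆ range n, #S ≤ finrank K M → LinearIndepOn K (v ∘ x) (S : Set ℕ))
    {τ : Fin n → Bool} (hτ : finrank K M ≤ #(trueIndices τ)) {φ : Dual K M} (hφ : φ ≠ 0) :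
    ¬ WellLabeledLeaf n (fun k _ => x k) {c | φ (v c) = 0} τ := by
  intro hleaf
  obtain ⟨T, hTτ, hT⟩ := exists_subset_card_eq hτ
  refine hφ ((hx T (hTτ.trans (trueIndices_subset_range τ)) hT.le).dual_eq_zero hT φ ?_)
  intro j hj
  obtain ⟨k, hk, rfl⟩ := Finset.mem_map.1 (hTτ hj)
  exact (hleaf k).2 (by simpa using hk)

end Leaves

theorem zeroSet_dotProductEquiv_symm {X F : Type*} [Field F] {d : ℕ} (f : X → Fin d → F)
    (φ : Dual F (Fin d → F)) :
    zeroSet f ((dotProductEquiv F (Fin d)).symm φ) = {c | φ (f c) = 0} := by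
  ext c
  change _ ⬝ᵥ _ = 0 ↔ _
  rw [← dotProductEquiv_apply_apply, LinearEquiv.apply_symm_apply]
  rfl

/-- If the image of `f : X → F^d` (`d ≥ 2`) is not contained in any finite
union of proper linear subspaces of `F^d`, then `C_f` is maximal of Littlestone
dimension `d - 1`: for every `n ≥ d - 1` there is an `(X, C_f)`-labeled tree of depth `n`
with exactly `∑_{i=0}^{d-1} (n choose i)` well-labeled leaves. -/
theorem statement10 {X F : Type*} [Field F] {d : ℕ} (hd : 2 ≤ d) (f : X → Fin d → F)
    (hcov : ¬ ∃ (k : ℕ) (V : Fin k → Submodule F (Fin d → F)),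
      (∀ i, V i ≠ ⊤) ∧ ∀ x : X, ∃ i, f x ∈ V i) :
    ∀ n : ℕ, d - 1 ≤ n →
      ∃ (t : (k : ℕ) → (Fin k → Bool) → X) (L : (Fin n → Bool) → Set X),
        (∀ τ, L τ ∈ zeroSets f) ∧
        Nat.card {τ : Fin n → Bool // WellLabeledLeaf n t (L τ) τ} =
          ∑ i ∈ Finset.range d, n.choose i := by
  intro n _
  have hrank : finrank F (Fin d → F) = d := finrank_fin_fun F
  have : Infinite F := infinite_of_not_covered hcov (by omega)
  obtain ⟨x, hx⟩ := exists_linearIndepOn_of_not_covered hcov n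
  have hleaf (τ : Fin n → Bool) : ∃ φ : Dual F (Fin d → F), φ ≠ 0 ∧
      (WellLabeledLeaf n (fun k _ => x k) {c | φ (f c) = 0} τ ↔ #(trueIndices τ) < d) := by
    by_cases hτ : #(trueIndices τ) < d
    · obtain ⟨φ, hφ0, hφ⟩ := exists_wellLabeledLeaf_of_card_lt hx (hrank ▸ hτ)
      exact ⟨φ, hφ0, iff_of_true hφ hτ⟩
    · have : Nonempty (Fin d) := ⟨⟨0, by omega⟩⟩
      obtain ⟨φ, hφ0⟩ := exists_ne (0 : Dual F (Fin d → F))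
      exact ⟨φ, hφ0, iff_of_false (not_wellLabeledLeaf_of_finrank_le hx (by omega) hφ0) hτ⟩
  choose φ hφ0 hφ using hleaf
  refine ⟨fun k _ => x k, fun τ => zeroSet f ((dotProductEquiv F (Fin d)).symm (φ τ)),
    fun τ => ⟨_, by simpa using hφ0 τ, rfl⟩, ?_⟩
  simp_rw [zeroSet_dotProductEquiv_symm]
  rw [Nat.card_congr (Equiv.subtypeEquivRight hφ)]
  simpa [trueIndices] using card_bool_fun_card_filter_lt n d
end

section
/- Let X be a set, F a field, d ≥ 2 an integer, and f : X → F^d. If f(X) is contained in a finite union of proper linear subspaces of F^d, then C_f = {Z_{f,a} : a ∈ F^d, a ≠ 0} is not maximal of VC-dimension d − 1: there exists n ≥ d − 1 such that every n-element subset Y ⊆ X satisfies |{A ∩ Y : A ∈ C_f}| < Σ_{i=0}^{d-1} C(n, i). Concretely, if f(X) is contained in the union of k proper subspaces and n = k(d−1)+1 with |X| ≥ n, every n-element subset Y satisfies this strict inequality. -/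
open Finset Module Submodule

section Span

variable {X F V : Type*} [Field F] [AddCommGroup V] [Module F V]

theorem LinearIndepOn.card_lt_finrank_of_ne_top [FiniteDimensional F V] {f : X → V}
    {B : Finset X} (hB : LinearIndepOn F f ↑B) {W : Submodule F V} (hW : W ≠ ⊤)
    (hBW : ∀ x ∈ B, f x ∈ W) : B.card < finrank F V :=
  calc B.card = finrank F (span F (f '' ↑B)) := by
        rw [Set.image_eq_range, finrank_span_eq_card hB]; simp
    _ ≤ finrank F W := finrank_mono (span_le.2 (by rintro _ ⟨x, hx, rfl⟩; exact hBW x hx))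
    _ < finrank F V := finrank_lt hW

theorem exists_finset_subset_linearIndepOn_span {f : X → V} {J : Set X} (hJ : J.Finite) :
    ∃ B : Finset X, ↑B ⊆ J ∧ LinearIndepOn F f ↑B ∧ f '' J ⊆ span F (f '' ↑B) := by
  obtain ⟨b, hbJ, -, hspan, hb⟩ := exists_linearIndepOn_extension (K := F) (v := f)
    (linearIndepOn_empty F f) (Set.empty_subset J)
  obtain ⟨B, rfl⟩ := (hJ.subset hbJ).exists_finset_coe
  exact ⟨B, hbJ, hb, hspan⟩

theorem exists_circuit_of_not_linearIndepOn [DecidableEq X] {f : X → V} {S : Finset X}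
    (hS : ¬ LinearIndepOn F f ↑S) :
    ∃ C ⊆ S, C.Nonempty ∧ ∀ c ∈ C, span F (f '' ↑(C.erase c)) = span F (f '' ↑C) := by
  obtain ⟨C, hCS, hmin⟩ := exists_minimal_le_of_wellFoundedLT
    (fun C : Finset X => ¬ LinearIndepOn F f ↑C) S hS
  refine ⟨C, hCS, ?_, fun c hc => ?_⟩
  · rw [Finset.nonempty_iff_ne_empty]
    rintro rfl
    exact hmin.prop (by simp)
  · have hCc : (C : Set X) = insert c ↑(C.erase c) := by simp [hc]
    have hmem : f c ∈ span F (f '' ↑(C.erase c)) := by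
      by_contra hnot
      refine hmin.prop ?_
      rw [hCc, linearIndepOn_insert (by simp)]
      exact ⟨not_not.1 (hmin.not_prop_of_lt (erase_ssubset hc)), hnot⟩
    rw [hCc, Set.image_insert_eq, span_insert_eq_span hmem]

theorem exists_ne_span_eq_of_not_linearIndepOn [DecidableEq X] {f : X → V} {S : Finset X}
    (hS : ¬ LinearIndepOn F f ↑S) (hS₂ : 2 ≤ S.card) :
    ∃ D₁ D₂ : Finset X, D₁ ⊆ S ∧ D₂ ⊆ S ∧ D₁.card < S.card ∧ D₂.card < S.card ∧ D₁ ≠ D₂ ∧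
      span F (f '' ↑D₁) = span F (f '' ↑D₂) := by
  obtain ⟨C, hCS, ⟨c, hc⟩, hC⟩ := exists_circuit_of_not_linearIndepOn hS
  obtain hC₁ | ⟨c, hc, c', hc', hne⟩ := C.eq_singleton_or_nontrivial hc
  · subst hC₁
    refine ⟨∅, {c}, empty_subset S, hCS, by rw [card_empty]; omega, by rw [card_singleton]; omega,
      by simp, ?_⟩
    simpa using hC c (mem_singleton_self c)
  · have hcard : (C.erase c).card < S.card :=
      (card_erase_lt_of_mem hc).trans_le (card_le_card hCS)
    have hcard' : (C.erase c').card < S.card :=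
      (card_erase_lt_of_mem hc').trans_le (card_le_card hCS)
    refine ⟨C.erase c, C.erase c', (erase_subset c C).trans hCS, (erase_subset c' C).trans hCS,
      hcard, hcard', fun h => ?_, by rw [hC c hc, hC c' hc']⟩
    have : c' ∈ C.erase c := mem_erase.2 ⟨hne.symm, hc'⟩
    simp [h] at this

theorem eq_inter_preimage_span_of_eq_inter_preimage {f : X → V} {Y J : Set X} {U : Submodule F V}
    (hJ : J = Y ∩ f ⁻¹' U) {B : Set X} (hBJ : B ⊆ J) (hspan : f '' J ⊆ span F (f '' B)) :
    J = Y ∩ f ⁻¹' span F (f '' B) := by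
  have hBU : span F (f '' B) ≤ U := by
    rw [span_le, Set.image_subset_iff]
    exact hBJ.trans (hJ ▸ Set.inter_subset_right)
  apply subset_antisymm
  · exact fun x hx => ⟨(hJ ▸ hx).1, hspan (Set.mem_image_of_mem f hx)⟩
  · rw [hJ]
    exact Set.inter_subset_inter_right Y (Set.preimage_mono hBU)

end Span

theorem Finset.card_filter_card_lt_powerset {X : Type*} (Y : Finset X) (n : ℕ) :
    (Y.powerset.filter (·.card < n)).card = ∑ i ∈ range n, Y.card.choose i := by
  classical
  rw [card_eq_sum_card_fiberwise (f := Finset.card) (t := range n)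
    fun D hD => mem_range.2 (mem_filter.1 hD).2]
  refine sum_congr rfl fun i hi => ?_
  rw [filter_filter, ← card_powersetCard, powersetCard_eq_filter]
  congr 1
  refine filter_congr fun D _ => ?_
  constructor
  · exact fun h => h.2
  · rintro rfl; exact ⟨mem_range.1 hi, rfl⟩

theorem ncard_lt_sum_choose_of_not_linearIndepOn {X F V : Type*} [Field F] [AddCommGroup V]
    [Module F V] [FiniteDimensional F V] (hV : 2 ≤ finrank F V) (f : X → V) (Y : Finset X)
    (𝓕 : Set (Set X)) (h𝓕 : ∀ J ∈ 𝓕, ∃ U : Submodule F V, U ≠ ⊤ ∧ J = ↑Y ∩ f ⁻¹' U)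
    {S : Finset X} (hSY : S ⊆ Y) (hS : S.card = finrank F V) (hSdep : ¬ LinearIndepOn F f ↑S) :
    𝓕.ncard < ∑ i ∈ range (finrank F V), Y.card.choose i := by
  classical
  have hbasis : ∀ J ∈ 𝓕, ∃ B : Finset X, ↑B ⊆ J ∧ LinearIndepOn F f ↑B ∧
      f '' J ⊆ span F (f '' ↑B) := fun J hJ => by
    obtain ⟨U, -, rfl⟩ := h𝓕 J hJ
    exact exists_finset_subset_linearIndepOn_span ((Y.finite_toSet).subset Set.inter_subset_left)
  choose! B hBJ hBind hBspan using hbasis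
  have hrecover : ∀ J ∈ 𝓕, J = ↑Y ∩ f ⁻¹' span F (f '' ↑(B J)) := fun J hJ => by
    obtain ⟨U, -, hJU⟩ := h𝓕 J hJ
    exact eq_inter_preimage_span_of_eq_inter_preimage hJU (hBJ J hJ) (hBspan J hJ)
  have heq_of_span_eq : ∀ J₁ ∈ 𝓕, ∀ J₂ ∈ 𝓕,
      span F (f '' ↑(B J₁)) = span F (f '' ↑(B J₂)) → J₁ = J₂ := fun J₁ hJ₁ J₂ hJ₂ h => by
    rw [hrecover J₁ hJ₁, hrecover J₂ hJ₂, h]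
  set small := Y.powerset.filter (·.card < finrank F V)
  have hmaps : ∀ J ∈ 𝓕, B J ∈ small := fun J hJ => by
    obtain ⟨U, hU, hJU⟩ := h𝓕 J hJ
    refine mem_filter.2 ⟨mem_powerset.2 fun x hx => ?_, ?_⟩
    · exact_mod_cast (hJU ▸ hBJ J hJ hx).1
    · exact (hBind J hJ).card_lt_finrank_of_ne_top hU fun x hx => (hJU ▸ hBJ J hJ hx).2
  obtain ⟨D₁, D₂, hD₁S, hD₂S, hD₁, hD₂, hne, hspan⟩ :=
    exists_ne_span_eq_of_not_linearIndepOn hSdep (hS ▸ hV)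
  have hmiss : ∃ D ∈ small, ∀ J ∈ 𝓕, B J ≠ D := by
    by_contra! hall
    obtain ⟨J₁, hJ₁, rfl⟩ := hall D₁ (by simp [small, hD₁S.trans hSY, ← hS, hD₁])
    obtain ⟨J₂, hJ₂, rfl⟩ := hall D₂ (by simp [small, hD₂S.trans hSY, ← hS, hD₂])
    exact hne (congrArg B (heq_of_span_eq J₁ hJ₁ J₂ hJ₂ hspan))
  obtain ⟨D, hD, hDmiss⟩ := hmiss
  calc 𝓕.ncard ≤ ((small.erase D : Finset (Finset X)) : Set (Finset X)).ncard :=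
        Set.ncard_le_ncard_of_injOn B (fun J hJ => mem_erase.2 ⟨hDmiss J hJ, hmaps J hJ⟩)
          (fun J₁ hJ₁ J₂ hJ₂ h => heq_of_span_eq J₁ hJ₁ J₂ hJ₂ (by rw [h])) (finite_toSet _)
    _ < small.card := by rw [Set.ncard_coe_finset]; exact card_erase_lt_of_mem hD
    _ = _ := card_filter_card_lt_powerset Y _

theorem exists_eq_inter_preimage_of_mem_traces_zeroSets {X F : Type*} [Field F] {d : ℕ}
    {f : X → Fin d → F} {Y J : Set X} (hJ : J ∈ traces (zeroSets f) Y) :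
    ∃ U : Submodule F (Fin d → F), U ≠ ⊤ ∧ J = Y ∩ f ⁻¹' U := by
  obtain ⟨_, ⟨a, ha, rfl⟩, rfl⟩ := hJ
  refine ⟨LinearMap.ker (dotProductEquiv F (Fin d) a), ?_, ?_⟩
  · exact LinearMap.ker_eq_top.not.2 ((dotProductEquiv F (Fin d)).map_ne_zero_iff.2 ha)
  · rw [Set.inter_comm]
    rfl

theorem ncard_traces_zeroSets_lt_of_mul_lt_card {X F ι : Type*} [Field F] [Fintype ι] {d : ℕ}
    (hd : 2 ≤ d) (f : X → Fin d → F) (V : ι → Submodule F (Fin d → F)) (hV : ∀ i, V i ≠ ⊤)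
    (hfV : ∀ x, ∃ i, f x ∈ V i) (Y : Finset X) (hY : Fintype.card ι * (d - 1) < Y.card) :
    (traces (zeroSets f) ↑Y).ncard < ∑ i ∈ range d, Y.card.choose i := by
  classical
  choose g hg using hfV
  obtain ⟨i, -, hi⟩ := exists_lt_card_fiber_of_mul_lt_card_of_maps_to
    (fun x _ => mem_univ (g x)) hY
  obtain ⟨S, hSi, hS⟩ := exists_subset_card_eq (show d ≤ (Y.filter (g · = i)).card by omega)
  have hfin : finrank F (Fin d → F) = d := finrank_fin_fun F
  have hSdep : ¬ LinearIndepOn F f ↑S := fun hS_ind =>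
    (hS_ind.card_lt_finrank_of_ne_top (hV i) fun x hx =>
      (mem_filter.1 (hSi hx)).2 ▸ hg x).ne (hS.trans hfin.symm)
  simpa only [hfin] using ncard_lt_sum_choose_of_not_linearIndepOn (hd.trans_eq hfin.symm) f Y _
    (fun J hJ => exists_eq_inter_preimage_of_mem_traces_zeroSets hJ)
    (hSi.trans (filter_subset _ Y)) (hS.trans hfin.symm) hSdep

/-- If the image of `f : X → F^d` (`d ≥ 2`) is contained in a finite union
of proper linear subspaces, then `C_f` is not maximal of VC-dimension `d - 1`: there is
`n ≥ d - 1` such that every `n`-element subset carries fewer than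
`∑_{i=0}^{d-1} (n choose i)` traces.  Concretely, if the image is covered by `k` proper
subspaces, then every subset of size `n = k(d-1)+1` carries fewer than
`∑_{i=0}^{d-1} (n choose i)` traces. -/
theorem statement14 {X F : Type*} [Field F] {d : ℕ} (hd : 2 ≤ d) (f : X → Fin d → F)
    (hcov : ∃ (k : ℕ) (V : Fin k → Submodule F (Fin d → F)),
      (∀ i, V i ≠ ⊤) ∧ ∀ x : X, ∃ i, f x ∈ V i) :
    (∃ n : ℕ, d - 1 ≤ n ∧ ∀ Y : Finset X, Y.card = n →
      (traces (zeroSets f) ↑Y).ncard < ∑ i ∈ Finset.range d, n.choose i) ∧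
    (∀ (k : ℕ) (V : Fin k → Submodule F (Fin d → F)),
      (∀ i, V i ≠ ⊤) → (∀ x : X, ∃ i, f x ∈ V i) →
      ∀ Y : Finset X, Y.card = k * (d - 1) + 1 →
        (traces (zeroSets f) ↑Y).ncard <
          ∑ i ∈ Finset.range d, (k * (d - 1) + 1).choose i) := by
  refine ⟨?_, fun k V hV hfV Y hY => ?_⟩
  · obtain ⟨k, V, hV, hfV⟩ := hcov
    refine ⟨k * (d - 1) + d, by omega, fun Y hY => ?_⟩
    rw [← hY]
    exact ncard_traces_zeroSets_lt_of_mul_lt_card hd f V hV hfV Y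
      (by rw [Fintype.card_fin]; omega)
  · rw [← hY]
    exact ncard_traces_zeroSets_lt_of_mul_lt_card hd f V hV hfV Y
      (by rw [Fintype.card_fin]; omega)
end

section
/- Let C be the set of all conic sections in ℝ², i.e., C = C_f for f : ℝ² → ℝ⁶ given by f(x, y) = (x², xy, y², x, y, 1). Then C has VC-dimension 5 and Littlestone dimension 5, and moreover C is maximal of VC-dimension 5 and maximal of Littlestone dimension 5. -/
/-- The moment map `(x, y) ↦ (x², xy, y², x, y, 1)` of the conic sections. -/
noncomputable def conicMap (p : ℝ × ℝ) : Fin 6 → ℝ :=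
  ![p.1 ^ 2, p.1 * p.2, p.2 ^ 2, p.1, p.2, 1]

/-!
Both upper bounds hold for the zero sets of any `f : X → F^d`. If `d` points were shattered, the
vectors `f pᵢ` would be annihilated by a nonzero `a`, hence linearly dependent, and a dependency
forbids cutting out all of the points but one. In a Littlestone tree, the leaves below the root
point `x` on the side `x ∈ A` are labelled by coefficient vectors from a hyperplane section of the
admissible subspace, a proper one because the other side is nonempty; so the depth is below `d`.

For the lower bounds put the points on the cubic `y = x³` at `x = 1, 2, …`. There the conic with
coefficients `a` becomes the polynomial `a₅ + a₃x + a₀x² + a₄x³ + a₁x⁴ + a₂x⁶`, which by Descartes'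
rule of signs has at most five positive roots; conversely `x^(5 - |Z|) (x + ∑ Z) ∏_{z ∈ Z} (x - z)`
has no `x⁵` term and its positive roots are exactly `Z`, for any set `Z` of at most five positive
reals. So the traces are exactly the subsets of at most five points, and the tree labelling every
node of depth `k` by the `k`-th point has one well-labeled leaf for each trace.
-/

open Finset Polynomial

namespace Polynomial

theorem signVariations_le_card_support_sub_one {R : Type*} [Semiring R] [LinearOrder R]
    (P : R[X]) : P.signVariations ≤ #P.support - 1 := by
  classical
  set idx := (List.range P.degree.succ).reverse.filter (fun i => P.coeff i ≠ 0)
  have hsigns : (P.coeffList.map SignType.sign).filter (· ≠ 0) =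
      (idx.map P.coeff).map SignType.sign := by
    simp [idx, coeffList, List.filter_map, Function.comp_def]
  have hidx : idx.length ≤ #P.support := by
    have hnd : idx.Nodup := (List.nodup_reverse.mpr List.nodup_range).filter _
    rw [← List.toFinset_card_of_nodup hnd]
    refine card_le_card fun i hi => ?_
    simp only [List.mem_toFinset, idx, List.mem_filter] at hi
    simpa using hi.2
  have := ((idx.map P.coeff).map SignType.sign |>.destutter_sublist (· ≠ ·)).length_le
  simp only [List.length_map] at this
  unfold signVariations
  rw [hsigns]
  omega

theorem card_le_card_support_sub_one_of_pos_roots {R : Type*} [CommRing R] [LinearOrder R]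
    [IsStrictOrderedRing R] {P : R[X]} (hP : P ≠ 0) (S : Finset R)
    (hS : ∀ x ∈ S, 0 < x ∧ P.IsRoot x) : #S ≤ #P.support - 1 := by
  have hle : S.val ≤ P.roots.filter (0 < ·) := (Multiset.le_iff_subset S.nodup).mpr fun x hx =>
    Multiset.mem_filter.mpr ⟨(mem_roots hP).mpr (hS x hx).2, (hS x hx).1⟩
  calc #S ≤ P.roots.countP (0 < ·) := by
        rw [Multiset.countP_eq_card_filter]; exact Multiset.card_le_card hle
    _ ≤ P.signVariations := roots_countP_pos_le_signVariations P
    _ ≤ #P.support - 1 := signVariations_le_card_support_sub_one P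

end Polynomial

section Families

variable {X : Type*} {C D : Set (Set X)} {n : ℕ}

lemma ShattersSet.subset {Y Y' : Set X} (h : ShattersSet C Y) (hY' : Y' ⊆ Y) :
    ShattersSet C Y' := by
  intro Z hZ
  obtain ⟨A, hA, hAY⟩ := h Z (hZ.trans hY')
  refine ⟨A, hA, ?_⟩
  rw [← Set.inter_eq_right.mpr hY', ← Set.inter_assoc, hAY, Set.inter_eq_left.mpr hZ]

lemma HasWellLabeledTree.mono_s18 (h : HasWellLabeledTree C n) (hCD : C ⊆ D) :
    HasWellLabeledTree D n :=
  let ⟨t, L, hL, hwl⟩ := h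
  ⟨t, L, fun τ => hCD (hL τ), hwl⟩

lemma HasWellLabeledTree.nonempty_s18 (h : HasWellLabeledTree C n) : C.Nonempty :=
  let ⟨_, L, hL, _⟩ := h
  ⟨L fun _ => false, hL _⟩

lemma wellLabeledLeaf_cons_iff (t : (k : ℕ) → (Fin k → Bool) → X) (A : Set X) (b : Bool)
    (τ : Fin n → Bool) :
    WellLabeledLeaf (n + 1) t A (Fin.cons b τ) ↔
      (t 0 Fin.elim0 ∈ A ↔ b = true) ∧
        WellLabeledLeaf n (fun k σ => t (k + 1) (Fin.cons b σ)) A τ := by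
  have hcons : ∀ k : Fin n, (fun j : Fin (k + 1) => (Fin.cons b τ : Fin (n + 1) → Bool)
      (Fin.castLE k.succ.isLt.le j)) = Fin.cons b fun j : Fin k => τ (Fin.castLE k.isLt.le j) :=
    fun k => funext fun j => Fin.cases rfl (fun j => rfl) j
  simp only [WellLabeledLeaf, Fin.forall_fin_succ, Fin.val_zero, Fin.cons_zero, Fin.val_succ,
    Fin.cons_succ, hcons]
  exact and_congr_left' (by congr!)

lemma HasWellLabeledTree.exists_split (h : HasWellLabeledTree C (n + 1)) :
    ∃ x, HasWellLabeledTree {A ∈ C | x ∈ A} n ∧ HasWellLabeledTree {A ∈ C | x ∉ A} n := by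
  obtain ⟨t, L, hL, hwl⟩ := h
  have subtree (b : Bool) : HasWellLabeledTree {A ∈ C | t 0 Fin.elim0 ∈ A ↔ b = true} n :=
    ⟨fun k σ => t (k + 1) (Fin.cons b σ), fun τ => L (Fin.cons b τ),
      fun τ => ⟨hL _, ((wellLabeledLeaf_cons_iff t _ b τ).mp (hwl _)).1⟩,
      fun τ => ((wellLabeledLeaf_cons_iff t _ b τ).mp (hwl _)).2⟩
  exact ⟨t 0 Fin.elim0, (subtree true).mono_s18 fun A hA => ⟨hA.1, by simpa using hA.2⟩,
    (subtree false).mono_s18 fun A hA => ⟨hA.1, by simpa using hA.2⟩⟩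

end Families

section Patterns

lemma ncard_setOf_card_filter_le (n m : ℕ) :
    {τ : Fin n → Bool | #{k | τ k = true} ≤ m}.ncard = ∑ i ∈ range (m + 1), n.choose i := by
  classical
  let e : Finset (Fin n) ≃ (Fin n → Bool) :=
    { toFun s k := decide (k ∈ s)
      invFun τ := {k | τ k = true}
      left_inv s := by ext; simp
      right_inv τ := by ext; simp }
  have himage : {τ : Fin n → Bool | #{k | τ k = true} ≤ m} = e '' {s | #s ≤ m} := by
    rw [e.image_eq_preimage_symm]; rfl
  have hsmall : {s : Finset (Fin n) | #s ≤ m} =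
      ↑((range (m + 1)).biUnion fun i => powersetCard i (univ : Finset (Fin n))) := by
    ext s
    simp
  rw [himage, Set.ncard_image_of_injective _ e.injective, hsmall, Set.ncard_coe_finset,
    card_biUnion fun i _ j _ hij => pairwise_disjoint_powersetCard univ hij]
  simp

variable {X : Type*} (x : ℕ → X)

open Classical in
noncomputable def pattern (n : ℕ) (A : Set X) : Fin n → Bool := fun k => decide (x k ∈ A)

variable {x}

lemma pattern_eq_true_iff {n : ℕ} {A : Set X} {k : Fin n} : pattern x n A k = true ↔ x k ∈ A := by
  simp [pattern]

lemma wellLabeledLeaf_const_iff {n : ℕ} {A : Set X} {τ : Fin n → Bool} :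
    WellLabeledLeaf n (fun k _ => x k) A τ ↔ pattern x n A = τ := by
  simp only [WellLabeledLeaf, funext_iff]
  exact forall_congr' fun k => by rw [Bool.eq_iff_iff (a := pattern x n A k), pattern_eq_true_iff]

variable (x)

lemma exists_tree_wellLabeledLeaf_iff {C : Set (Set X)} (hC : C.Nonempty) (n : ℕ) :
    ∃ (t : (k : ℕ) → (Fin k → Bool) → X) (L : (Fin n → Bool) → Set X),
      (∀ τ, L τ ∈ C) ∧ ∀ τ, WellLabeledLeaf n t (L τ) τ ↔ τ ∈ pattern x n '' C := by
  classical
  refine ⟨fun k _ => x k, fun τ => if h : τ ∈ pattern x n '' C then h.choose else hC.some,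
    fun τ => ?_, fun τ => ?_⟩ <;> dsimp only
  · split_ifs with h
    exacts [h.choose_spec.1, hC.some_mem]
  · rw [wellLabeledLeaf_const_iff]
    split_ifs with h
    · exact iff_of_true h.choose_spec.2 h
    · exact iff_of_false (fun h' => h ⟨_, hC.some_mem, h'⟩) h

lemma shattersSet_of_forall_mem_image_pattern [DecidableEq X] {C : Set (Set X)} {n : ℕ}
    (h : ∀ τ, τ ∈ pattern x n '' C) : ShattersSet C ↑((range n).image x) := by
  classical
  intro Z hZ
  obtain ⟨A, hA, hAZ⟩ := h fun k => decide (x k ∈ Z)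
  refine ⟨A, hA, Set.ext fun y => ?_⟩
  by_cases hy : y ∈ ((range n).image x : Set X)
  · obtain ⟨k, hk, rfl⟩ := by simpa using hy
    have := congrFun hAZ ⟨k, hk⟩
    rw [Bool.eq_iff_iff, pattern_eq_true_iff, decide_eq_true_iff] at this
    exact (and_iff_left hy).trans this
  · exact iff_of_false (fun h => hy h.2) (fun h => hy (hZ h))

lemma ncard_image_pattern [DecidableEq X] (C : Set (Set X)) (n : ℕ) :
    (pattern x n '' C).ncard = (traces C ↑((range n).image x)).ncard := by
  set Y : Set X := ↑((range n).image x)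
  have hxY : ∀ k : Fin n, x k ∈ Y := fun k => by simpa [Y] using ⟨k, k.isLt, rfl⟩
  have hinter : ∀ A, pattern x n (A ∩ Y) = pattern x n A := fun A => funext fun k => by
    rw [Bool.eq_iff_iff, pattern_eq_true_iff, pattern_eq_true_iff]
    simp [hxY k]
  have hinj : Set.InjOn (pattern x n) (traces C Y) := by
    rintro _ ⟨A, -, rfl⟩ _ ⟨B, -, rfl⟩ hAB
    ext y
    by_cases hy : y ∈ Y
    · obtain ⟨k, hk, rfl⟩ := by simpa [Y] using hy
      have := congrFun hAB ⟨k, hk⟩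
      rwa [Bool.eq_iff_iff, pattern_eq_true_iff, pattern_eq_true_iff] at this
    · exact iff_of_false (fun h => hy h.2) (fun h => hy h.2)
  have himage : pattern x n '' C = pattern x n '' traces C Y := by
    simp only [traces, Set.image_image, hinter]
  rw [himage, hinj.ncard_image]

end Patterns

section ZeroSets

variable {X F : Type*} [Field F] {d : ℕ} (f : X → Fin d → F)

open Matrix in
lemma not_shattersSet_range_zeroSets {p : Fin d → X} (hp : Function.Injective p) :
    ¬ ShattersSet (zeroSets f) (Set.range p) := by
  intro hsh
  let M : Matrix (Fin d) (Fin d) F := Matrix.of fun m i => f (p i) m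
  have hM : ∀ a i, p i ∈ zeroSet f a ↔ (a ᵥ* M) i = 0 := fun _ _ => Iff.rfl
  obtain ⟨_, ⟨a, ha, rfl⟩, hall⟩ := hsh (Set.range p) subset_rfl
  have haM : a ᵥ* M = 0 := funext fun i =>
    (hM a i).mp (hall.symm ▸ Set.mem_range_self i : p i ∈ zeroSet f a ∩ Set.range p).1
  obtain ⟨g, hg, hMg⟩ := exists_mulVec_eq_zero_iff.mpr (exists_vecMul_eq_zero_iff.mp ⟨a, ha, haM⟩)
  obtain ⟨j, hj⟩ := Function.ne_iff.mp hg
  obtain ⟨_, ⟨b, -, rfl⟩, hb⟩ := hsh (Set.range p \ {p j}) Set.sdiff_subset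
  have hbM : ∀ i, (b ᵥ* M) i = 0 ↔ i ≠ j := fun i => by
    simpa [hp.eq_iff, hM] using congrArg (p i ∈ ·) hb
  have : (b ᵥ* M) ⬝ᵥ g = (b ᵥ* M) j * g j :=
    sum_eq_single j (fun i _ hij => by rw [(hbM i).mpr hij, zero_mul]) (by simp)
  rw [← dotProduct_mulVec, hMg, dotProduct_zero] at this
  exact mul_ne_zero (fun h => (hbM j).mp h rfl) hj this.symm

lemma card_lt_of_shattersSet_zeroSets (Y : Finset X) (hY : ShattersSet (zeroSets f) Y) :
    #Y < d := by
  by_contra! h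
  let p : Fin d → X := fun i => Y.equivFin.symm (Fin.castLE h i)
  have hp : Function.Injective p := fun i i' hii' =>
    Fin.castLE_injective h (Y.equivFin.symm.injective (Subtype.ext hii'))
  exact not_shattersSet_range_zeroSets f hp
    (hY.subset (Set.range_subset_iff.mpr fun i => (Y.equivFin.symm _).2))

lemma lt_finrank_of_hasWellLabeledTree (V : Submodule F (Fin d → F)) {n : ℕ}
    (h : HasWellLabeledTree (zeroSet f '' ((V : Set (Fin d → F)) \ {0})) n) :
    n < Module.finrank F V := by
  induction n generalizing V with
  | zero =>
    obtain ⟨_, ⟨a, ⟨haV, ha0⟩, rfl⟩⟩ := h.nonempty_s18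
    exact Module.finrank_pos_iff_exists_ne_zero.mpr
      ⟨⟨a, haV⟩, fun h0 => ha0 (congrArg Subtype.val h0)⟩
  | succ n ih =>
    obtain ⟨x, hin, hout⟩ := h.exists_split
    let W := V ⊓ LinearMap.ker (Fintype.linearCombination F (f x))
    have hW : ∀ a, a ∈ W ↔ a ∈ V ∧ x ∈ zeroSet f a := fun a => by
      simp [W, zeroSet, Fintype.linearCombination_apply]
    obtain ⟨_, ⟨⟨a, ⟨haV, -⟩, rfl⟩, hxa⟩⟩ := hout.nonempty_s18
    have hWV : W < V := SetLike.lt_iff_le_and_exists.mpr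
      ⟨inf_le_left, a, haV, fun haW => hxa ((hW a).mp haW).2⟩
    have := ih W (hin.mono_s18 fun _ ⟨⟨a, ⟨haV, ha0⟩, hA⟩, hxA⟩ =>
      ⟨a, ⟨(hW a).mpr ⟨haV, hA ▸ hxA⟩, ha0⟩, hA⟩)
    have := Submodule.finrank_lt_finrank_of_lt hWV
    omega

lemma not_hasWellLabeledTree_zeroSets {n : ℕ} (hn : d ≤ n) :
    ¬ HasWellLabeledTree (zeroSets f) n := fun h => by
  have := lt_finrank_of_hasWellLabeledTree f ⊤
    (h.mono_s18 fun _ ⟨a, ha0, hA⟩ => ⟨a, ⟨trivial, ha0⟩, hA.symm⟩)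
  rw [finrank_top, Module.finrank_fin_fun] at this
  omega

end ZeroSets

section ConicsOnCubic

def onCubic (s : ℝ) : ℝ × ℝ := (s, s ^ 3)

def conicExp : Fin 6 → ℕ := ![2, 4, 6, 1, 3, 0]

lemma conicExp_injective : Function.Injective conicExp := by decide

lemma conicMap_onCubic (s : ℝ) (i : Fin 6) : conicMap (onCubic s) i = s ^ conicExp i := by
  fin_cases i <;> simp [conicMap, onCubic, conicExp] <;> ring

noncomputable def conicPoly (a : Fin 6 → ℝ) : ℝ[X] := ∑ i, monomial (conicExp i) (a i)

lemma onCubic_mem_zeroSet_iff (a : Fin 6 → ℝ) (s : ℝ) :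
    onCubic s ∈ zeroSet conicMap a ↔ (conicPoly a).IsRoot s := by
  simp [IsRoot, conicPoly, eval_finsetSum, conicMap_onCubic, zeroSet]

lemma coeff_conicPoly (a : Fin 6 → ℝ) (n : ℕ) :
    (conicPoly a).coeff n = ∑ i, if conicExp i = n then a i else 0 := by
  simp [conicPoly, finsetSum_coeff, coeff_monomial]

lemma coeff_conicPoly_conicExp (a : Fin 6 → ℝ) (i : Fin 6) :
    (conicPoly a).coeff (conicExp i) = a i := by
  simp [coeff_conicPoly, conicExp_injective.eq_iff]

lemma support_conicPoly_subset (a : Fin 6 → ℝ) : (conicPoly a).support ⊆ univ.image conicExp := by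
  intro n hn
  obtain ⟨i, -, hi⟩ := exists_ne_zero_of_sum_ne_zero ((coeff_conicPoly a n) ▸ mem_support_iff.mp hn)
  exact mem_image.mpr ⟨i, mem_univ _, by_contra fun h => hi (if_neg h)⟩

lemma conicPoly_ne_zero {a : Fin 6 → ℝ} (ha : a ≠ 0) : conicPoly a ≠ 0 := by
  obtain ⟨i, hi⟩ := Function.ne_iff.mp ha
  intro h
  exact hi (by simpa [h] using (coeff_conicPoly_conicExp a i).symm)

lemma exists_conicPoly_eq {q : ℝ[X]} (hq : q.natDegree ≤ 6) (h5 : q.coeff 5 = 0) :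
    ∃ a, conicPoly a = q := by
  refine ⟨fun i => q.coeff (conicExp i), ext fun n => ?_⟩
  rw [coeff_conicPoly]
  rcases lt_or_ge n 7 with hn | hn
  · interval_cases n <;> simp [Fin.sum_univ_six, conicExp, h5]
  · rw [coeff_eq_zero_of_natDegree_lt (hq.trans_lt hn)]
    refine sum_eq_zero fun i _ => if_neg ?_
    have : conicExp i ≤ 6 := by fin_cases i <;> decide
    omega

lemma card_le_five_of_pos_roots_conicPoly {a : Fin 6 → ℝ} (ha : a ≠ 0) (S : Finset ℝ)
    (hS : ∀ s ∈ S, 0 < s ∧ (conicPoly a).IsRoot s) : #S ≤ 5 := by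
  have hsupp : #(conicPoly a).support ≤ 6 :=
    (card_le_card (support_conicPoly_subset a)).trans (card_image_le.trans (by simp))
  have := card_le_card_support_sub_one_of_pos_roots (conicPoly_ne_zero ha) S hS
  omega

lemma exists_conicPoly_pos_roots_eq (Z : Finset ℝ) (hZ : ∀ z ∈ Z, 0 < z) (hcard : #Z ≤ 5) :
    ∃ a ≠ 0, ∀ s, 0 < s → ((conicPoly a).IsRoot s ↔ s ∈ Z) := by
  set e := ∑ z ∈ Z, z
  set q : ℝ[X] := X ^ (5 - #Z) * (X + C e) * ∏ z ∈ Z, (X - C z)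
  have hprod : (∏ z ∈ Z, (X - C z)).Monic := monic_prod_of_monic _ _ fun z _ => monic_X_sub_C z
  have hfac : (X ^ (5 - #Z) * (X + C e)).Monic := (monic_X_pow _).mul (monic_X_add_C e)
  have hdeg : q.natDegree = 6 := by
    rw [hfac.natDegree_mul hprod, (monic_X_pow _).natDegree_mul (monic_X_add_C e),
      natDegree_X_pow, natDegree_X_add_C, natDegree_finsetProd_X_sub_C_eq_card]
    omega
  have h5 : q.coeff 5 = 0 := by
    have hXpow : (X ^ (5 - #Z) : ℝ[X]).nextCoeff = 0 := by
      rw [monic_X.nextCoeff_pow]; simp [nextCoeff]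
    have hnext : q.nextCoeff = 0 := by
      rw [hfac.nextCoeff_mul hprod, (monic_X_pow _).nextCoeff_mul (monic_X_add_C e), hXpow,
        nextCoeff_X_add_C, prod_X_sub_C_nextCoeff]
      ring
    rwa [nextCoeff_of_natDegree_pos (by omega), hdeg] at hnext
  obtain ⟨a, ha⟩ := exists_conicPoly_eq hdeg.le h5
  refine ⟨a, ?_, fun s hs => ?_⟩
  · rintro rfl
    exact (hfac.mul hprod).ne_zero (ha.symm.trans (by simp [conicPoly]))
  · have he : 0 ≤ e := sum_nonneg fun z hz => (hZ z hz).le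
    rw [ha, IsRoot, eval_mul, eval_mul, eval_prod, mul_eq_zero, mul_eq_zero, prod_eq_zero_iff]
    simp only [eval_pow, eval_X, eval_add, eval_C, eval_sub, sub_eq_zero]
    constructor
    · rintro ((h | h) | ⟨z, hz, rfl⟩)
      · exact absurd (pow_eq_zero_iff'.mp h).1 hs.ne'
      · linarith
      · exact hz
    · exact fun hsZ => Or.inr ⟨s, hsZ, rfl⟩

def cubicPoint (k : ℕ) : ℝ × ℝ := onCubic (k + 1)

lemma cubicPoint_injective : Function.Injective cubicPoint := fun k l h => by
  simpa [cubicPoint, onCubic] using congrArg Prod.fst h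

lemma image_pattern_cubicPoint_zeroSets (n : ℕ) :
    pattern cubicPoint n '' zeroSets conicMap = {τ | #{k | τ k = true} ≤ 5} := by
  have hshift : Function.Injective fun k : Fin n => ((k : ℕ) : ℝ) + 1 := fun k l h =>
    Fin.ext (by simpa using h)
  ext τ
  constructor
  · rintro ⟨_, ⟨a, ha, rfl⟩, rfl⟩
    rw [Set.mem_ofPred_eq, ← card_image_of_injective _ hshift]
    refine card_le_five_of_pos_roots_conicPoly ha _ fun s hs => ?_
    obtain ⟨k, hk, rfl⟩ := mem_image.mp hs
    rw [mem_filter, pattern_eq_true_iff, cubicPoint, onCubic_mem_zeroSet_iff] at hk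
    exact ⟨by positivity, by exact_mod_cast hk.2⟩
  · intro hτ
    obtain ⟨a, ha, hroots⟩ := exists_conicPoly_pos_roots_eq
      (({k | τ k = true} : Finset (Fin n)).image fun k : Fin n => ((k : ℕ) : ℝ) + 1)
      (fun s hs => by obtain ⟨k, -, rfl⟩ := mem_image.mp hs; positivity)
      ((card_image_of_injective _ hshift).trans_le hτ)
    refine ⟨_, ⟨a, ha, rfl⟩, funext fun k => ?_⟩
    rw [Bool.eq_iff_iff, pattern_eq_true_iff, cubicPoint, onCubic_mem_zeroSet_iff,
      hroots _ (by positivity), hshift.mem_finset_image]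
    simp

end ConicsOnCubic

/-- The family of conic sections in `ℝ²` has VC-dimension `5` and
Littlestone dimension `5`, and is maximal of VC-dimension `5` and of Littlestone
dimension `5`. -/
theorem statement18 :
    ((∃ Y : Finset (ℝ × ℝ), Y.card = 5 ∧ ShattersSet (zeroSets conicMap) ↑Y) ∧
      (∀ Y : Finset (ℝ × ℝ), ShattersSet (zeroSets conicMap) ↑Y → Y.card ≤ 5)) ∧
    (HasWellLabeledTree (zeroSets conicMap) 5 ∧
      (∀ n : ℕ, 6 ≤ n → ¬ HasWellLabeledTree (zeroSets conicMap) n)) ∧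
    (∀ n : ℕ, 5 ≤ n → ∃ Y : Finset (ℝ × ℝ), Y.card = n ∧
      (traces (zeroSets conicMap) ↑Y).ncard = ∑ i ∈ Finset.range 6, n.choose i) ∧
    (∀ n : ℕ, 5 ≤ n →
      ∃ (t : (k : ℕ) → (Fin k → Bool) → ℝ × ℝ) (L : (Fin n → Bool) → Set (ℝ × ℝ)),
        (∀ τ, L τ ∈ zeroSets conicMap) ∧
        Nat.card {τ : Fin n → Bool // WellLabeledLeaf n t (L τ) τ} =
          ∑ i ∈ Finset.range 6, n.choose i) := by
  have hpat := image_pattern_cubicPoint_zeroSets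
  have hC : (zeroSets conicMap).Nonempty := ⟨_, 1, one_ne_zero, rfl⟩
  have hcard (n : ℕ) : #((range n).image cubicPoint) = n := by
    rw [card_image_of_injective _ cubicPoint_injective, card_range]
  have hall (τ : Fin 5 → Bool) : τ ∈ pattern cubicPoint 5 '' zeroSets conicMap := by
    rw [hpat]
    exact (card_filter_le _ _).trans (by simp)
  refine ⟨⟨⟨_, hcard 5, shattersSet_of_forall_mem_image_pattern cubicPoint hall⟩,
      fun Y hY => Nat.lt_succ_iff.mp (card_lt_of_shattersSet_zeroSets conicMap Y hY)⟩,
    ⟨?_, fun n hn => not_hasWellLabeledTree_zeroSets conicMap hn⟩,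
    fun n _ => ⟨_, hcard n, by rw [← ncard_image_pattern, hpat, ncard_setOf_card_filter_le]⟩,
    fun n _ => ?_⟩
  · obtain ⟨t, L, hL, hwl⟩ := exists_tree_wellLabeledLeaf_iff cubicPoint hC 5
    exact ⟨t, L, hL, fun τ => (hwl τ).mpr (hall τ)⟩
  · obtain ⟨t, L, hL, hwl⟩ := exists_tree_wellLabeledLeaf_iff cubicPoint hC n
    refine ⟨t, L, hL, ?_⟩
    rw [← ncard_setOf_card_filter_le, ← hpat, ← Nat.card_coe_set_eq]
    exact Nat.card_congr (Equiv.subtypeEquivRight hwl)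
end
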